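/- arXiv:2506.15270 — 7 statements merged into one kernel-verified Lean document; each statement's English description precedes it below -/
import Mathlib

section
/- Let H be a separable infinite-dimensional complex Hilbert space and T a bounded linear operator on H with spectrum σ(T) = {0} and with no eigenvalues (i.e., there is no μ ∈ ℂ and nonzero v ∈ H with Tv = μv). Let x ∈ H be such that T^m x is a cyclic vector of T for every integer m ≥ 1. Then for every nonzero square-summable complex sequence α = (α_k)_{k≥0}, the vector ∑_{k≥0} α_k T^k x (this series converges absolutely since σ(T) = {0}) is a cyclic vector of T. -/
open Filter Topology Function
open scoped ENNReal NNReal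

set_option maxHeartbeats 2000000 in
/-- **Theorem D.** Let `T ∈ B(H)` with `σ(T) = {0}` and no eigenvalues.  If `T^m x` is a
cyclic vector of `T` for every `m ≥ 1`, then for every nonzero `α ∈ ℓ²` the vector
`∑_k α_k T^k x` is a cyclic vector of `T`. -/
theorem stmt3
    {H : Type*} [NormedAddCommGroup H] [InnerProductSpace ℂ H] [CompleteSpace H]
    [TopologicalSpace.SeparableSpace H] (hinf : ¬ FiniteDimensional ℂ H)
    (T : H →L[ℂ] H) (hspec : spectrum ℂ T = {0})
    (hpoint : ∀ (μ : ℂ) (v : H), T v = μ • v → v = 0)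
    (x : H)
    (hcyc : ∀ m : ℕ, 1 ≤ m →
      (Submodule.span ℂ (Set.range fun n : ℕ => (T ^ n) ((T ^ m) x))).topologicalClosure = ⊤)
    (α : ℕ → ℂ) (hα2 : Memℓp α 2) (hα : α ≠ 0) :
    (Submodule.span ℂ
        (Set.range fun n : ℕ => (T ^ n) (∑' k : ℕ, α k • (T ^ k) x))).topologicalClosure = ⊤ := by
  classical
  have hnt : Nontrivial H := by
    by_contra h
    rw [not_nontrivial_iff_subsingleton] at h
    exact hinf inferInstance
  -- spectral radius of `T` is zero
  have hsr : spectralRadius ℂ T = 0 := by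
    simp [spectralRadius, hspec]
  have hgel : Tendsto (fun n : ℕ => (‖T ^ n‖₊ : ℝ≥0∞) ^ (1 / n : ℝ)) atTop (𝓝 0) := by
    simpa [hsr] using spectrum.pow_nnnorm_pow_one_div_tendsto_nhds_spectralRadius T
  have hreal : Tendsto (fun n : ℕ => ‖T ^ n‖ ^ (1 / n : ℝ)) atTop (𝓝 0) := by
    have h0 := spectrum.pow_norm_pow_one_div_tendsto_nhds_spectralRadius T
    rw [hsr] at h0
    have h1 := (ENNReal.tendsto_toReal (a := 0) (by simp)).comp h0
    simpa [Function.comp_def,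
      ENNReal.toReal_ofReal (Real.rpow_nonneg (norm_nonneg _) _)] using h1
  -- summability of `‖T ^ k‖`
  have hsumT : Summable fun k : ℕ => ‖T ^ k‖ := by
    have hev : ∀ᶠ n : ℕ in atTop, ‖T ^ n‖ ≤ (1 / 2 : ℝ) ^ n := by
      filter_upwards [hreal.eventually (eventually_lt_nhds (by norm_num : (0:ℝ) < 1/2)),
        eventually_ge_atTop 1] with n h1 h2
      have hn0 : n ≠ 0 := by omega
      have h3 : (‖T ^ n‖ ^ (1 / n : ℝ)) ^ n ≤ (1 / 2 : ℝ) ^ n :=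
        pow_le_pow_left₀ (Real.rpow_nonneg (norm_nonneg _) _) h1.le n
      rwa [one_div, Real.rpow_inv_natCast_pow (norm_nonneg _) hn0] at h3
    apply summable_of_isBigO_nat (summable_geometric_of_lt_one (r := (1/2 : ℝ)) (by norm_num) (by norm_num))
    rw [Asymptotics.isBigO_iff]
    refine ⟨1, ?_⟩
    filter_upwards [hev] with n hn
    calc ‖‖T ^ n‖‖ = ‖T ^ n‖ := by rw [Real.norm_eq_abs, abs_of_nonneg (norm_nonneg _)]
      _ ≤ (1 / 2 : ℝ) ^ n := hn
      _ ≤ 1 * ‖(1 / 2 : ℝ) ^ n‖ := by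
          rw [one_mul, Real.norm_eq_abs, abs_of_nonneg (by positivity)]
  -- a uniform bound on `α`
  obtain ⟨C, hC0, hC⟩ : ∃ C : ℝ, 0 ≤ C ∧ ∀ k, ‖α k‖ ≤ C := by
    have h2 : Summable fun k => ‖α k‖ ^ (2 : ℝ) := by
      simpa using hα2.summable (by norm_num : 0 < (2 : ℝ≥0∞).toReal)
    refine ⟨max 1 (∑' k, ‖α k‖ ^ (2 : ℝ)), le_trans zero_le_one (le_max_left _ _), fun k => ?_⟩
    by_cases h : ‖α k‖ ≤ 1
    · exact h.trans (le_max_left _ _)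
    · push_neg at h
      have h1 : ‖α k‖ ≤ ‖α k‖ ^ (2 : ℝ) := by
        nth_rewrite 1 [← Real.rpow_one ‖α k‖]
        exact Real.rpow_le_rpow_of_exponent_le h.le (by norm_num)
      exact h1.trans ((Summable.le_tsum h2 k fun j _ => Real.rpow_nonneg (norm_nonneg _) _).trans
        (le_max_right _ _))
  -- summability of operator series with bounded coefficients
  have hop : ∀ β : ℕ → ℂ, (∀ k, ‖β k‖ ≤ C) → Summable fun k => β k • (T ^ k : H →L[ℂ] H) := by
    intro β hβ
    apply Summable.of_norm
    refine Summable.of_nonneg_of_le (fun k => norm_nonneg _) (fun k => ?_) (hsumT.mul_left C)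
    rw [norm_smul]
    exact mul_le_mul_of_nonneg_right (hβ k) (norm_nonneg _)
  have hvec : ∀ β : ℕ → ℂ, (∀ k, ‖β k‖ ≤ C) → ∀ v : H,
      Summable fun k => β k • (T ^ k) v := by
    intro β hβ v
    have h2 := ((hop β hβ).map (ContinuousLinearMap.apply ℂ H v)
      (ContinuousLinearMap.apply ℂ H v).continuous)
    exact h2.congr fun k => by simp
  -- the minimal index with nonzero coefficient
  have hex : ∃ k, α k ≠ 0 := by
    by_contra h
    push_neg at h
    exact hα (funext h)
  set m : ℕ := Nat.find hex with hm_def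
  have hm : α m ≠ 0 := Nat.find_spec hex
  have hmin : ∀ k < m, α k = 0 := fun k hk => by
    have := Nat.find_min hex hk
    simpa using this
  -- the operator `A`
  set A : H →L[ℂ] H := ∑' k : ℕ, α (m + 1 + k) • T ^ k with hA_def
  have hAsum : Summable fun k : ℕ => α (m + 1 + k) • (T ^ k : H →L[ℂ] H) :=
    hop _ fun k => hC _
  -- `T` commutes with `A`
  have hTA : Commute T A := by
    have h1 : ∀ k : ℕ, T * (α (m + 1 + k) • T ^ k) = (α (m + 1 + k) • T ^ k) * T := by
      intro k
      rw [mul_smul_comm, smul_mul_assoc, ← pow_succ, ← pow_succ']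
    show T * A = A * T
    rw [hA_def, ← hAsum.tsum_mul_left T, ← hAsum.tsum_mul_right T]
    exact tsum_congr h1
  set N : H →L[ℂ] H := T * A with hN_def
  have hTN : Commute T N := (Commute.refl T).mul_right hTA
  -- spectral radius of `N` is zero
  have hNrad : spectralRadius ℂ N = 0 := by
    refine le_antisymm ?_ (by simp)
    refine (spectrum.spectralRadius_le_liminf_pow_nnnorm_pow_one_div ℂ N).trans ?_
    have hlim : Tendsto (fun n : ℕ => (‖N ^ n‖₊ : ℝ≥0∞) ^ (1 / n : ℝ)) atTop (𝓝 0) := by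
      have h2 : Tendsto (fun n : ℕ => (‖T ^ n‖₊ : ℝ≥0∞) ^ (1 / n : ℝ) * (‖A‖₊ : ℝ≥0∞))
          atTop (𝓝 0) := by
        simpa using ENNReal.Tendsto.mul_const hgel (Or.inr ENNReal.coe_ne_top)
      refine tendsto_of_tendsto_of_tendsto_of_le_of_le' tendsto_const_nhds h2
        (Eventually.of_forall fun n => by simp) ?_
      filter_upwards [eventually_ge_atTop 1] with n hn
      have hn0 : (n : ℝ) ≠ 0 := by positivity
      have h3 : ‖N ^ n‖₊ ≤ ‖T ^ n‖₊ * ‖A‖₊ ^ n := by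
        rw [hTA.mul_pow]
        exact (nnnorm_mul_le _ _).trans (mul_le_mul_right (nnnorm_pow_le' A hn) _)
      calc (‖N ^ n‖₊ : ℝ≥0∞) ^ (1 / n : ℝ)
          ≤ ((‖T ^ n‖₊ * ‖A‖₊ ^ n : ℝ≥0) : ℝ≥0∞) ^ (1 / n : ℝ) :=
            ENNReal.rpow_le_rpow (by exact_mod_cast h3) (by positivity)
        _ = (‖T ^ n‖₊ : ℝ≥0∞) ^ (1 / n : ℝ) * ((‖A‖₊ : ℝ≥0∞) ^ (n : ℕ)) ^ (1 / n : ℝ) := by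
            rw [ENNReal.coe_mul, ENNReal.coe_pow,
              ENNReal.mul_rpow_of_nonneg _ _ (by positivity)]
        _ = (‖T ^ n‖₊ : ℝ≥0∞) ^ (1 / n : ℝ) * (‖A‖₊ : ℝ≥0∞) := by
            rw [← ENNReal.rpow_natCast (‖A‖₊ : ℝ≥0∞) n, ← ENNReal.rpow_mul,
              mul_one_div, div_self hn0, ENNReal.rpow_one]
    rw [hlim.liminf_eq]
  have hspecN : spectrum ℂ N ⊆ {0} := by
    intro z hz
    have h1 : (‖z‖₊ : ℝ≥0∞) ≤ spectralRadius ℂ N := le_iSup₂ (α := ℝ≥0∞) z hz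
    rw [hNrad, nonpos_iff_eq_zero] at h1
    simp only [ENNReal.coe_eq_zero, nnnorm_eq_zero] at h1
    simpa using h1
  -- `S` is a unit
  set S : H →L[ℂ] H := α m • 1 + N with hS_def
  have hSunit : IsUnit S := by
    have h1 : (-(α m)) ∉ spectrum ℂ N := by
      intro h
      have h2 := hspecN h
      simp only [Set.mem_singleton_iff, neg_eq_zero] at h2
      exact hm h2
    rw [spectrum.notMem_iff] at h1
    have h2 : (algebraMap ℂ (H →L[ℂ] H)) (-(α m)) - N = -S := by
      rw [hS_def, Algebra.algebraMap_eq_smul_one, neg_smul]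
      abel
    rw [h2, IsUnit.neg_iff] at h1
    exact h1
  -- `T` commutes with `S`
  have hTS : Commute T S := Commute.add_right ((Commute.one_right T).smul_right (α m)) hTN
  -- the key identity: `∑' k, α k • T^k x = S (T^m x)`
  have hy : (∑' k : ℕ, α k • (T ^ k) x) = S ((T ^ m) x) := by
    have hg : Summable fun k : ℕ => α k • (T ^ k) x := hvec α hC x
    have hshift : Summable fun j : ℕ => α (j + m) • (T ^ j) ((T ^ m) x) := by
      refine (hg.comp_injective (add_left_injective m)).congr fun j => ?_
      simp [pow_add, ContinuousLinearMap.mul_apply, Function.iterate_add_apply]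
    have step1 : (∑' k : ℕ, α k • (T ^ k) x) = ∑' j : ℕ, α (j + m) • (T ^ (j + m)) x := by
      refine (Function.Injective.tsum_eq (add_left_injective m) ?_).symm
      intro k hk
      rw [Function.mem_support] at hk
      have hkm : m ≤ k := by
        by_contra hcon
        push_neg at hcon
        exact hk (by rw [hmin k hcon, zero_smul])
      exact ⟨k - m, by simpa using Nat.sub_add_cancel hkm⟩
    have step2 : (∑' j : ℕ, α (j + m) • (T ^ (j + m)) x)
        = ∑' j : ℕ, α (j + m) • (T ^ j) ((T ^ m) x) := by
      refine tsum_congr fun j => ?_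
      rw [pow_add, ContinuousLinearMap.mul_apply]
    have step3 : (∑' j : ℕ, α (j + m) • (T ^ j) ((T ^ m) x))
        = α m • (T ^ m) x + ∑' j : ℕ, α (j + 1 + m) • T ((T ^ j) ((T ^ m) x)) := by
      rw [Summable.tsum_eq_zero_add hshift]
      simp only [zero_add, pow_zero, ContinuousLinearMap.one_apply]
      congr 1
      refine tsum_congr fun j => ?_
      rw [pow_succ', ContinuousLinearMap.mul_apply]
    have step4 : (∑' j : ℕ, α (j + 1 + m) • T ((T ^ j) ((T ^ m) x)))
        = T (∑' j : ℕ, α (j + 1 + m) • (T ^ j) ((T ^ m) x)) := by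
      rw [ContinuousLinearMap.map_tsum T (hvec _ (fun j => hC _) ((T ^ m) x))]
      exact tsum_congr fun j => by rw [map_smul]
    have step5 : (∑' j : ℕ, α (j + 1 + m) • (T ^ j) ((T ^ m) x)) = A ((T ^ m) x) := by
      have h5 := (ContinuousLinearMap.apply ℂ H ((T ^ m) x)).map_tsum hAsum
      simp only [ContinuousLinearMap.apply_apply, ContinuousLinearMap.coe_smul',
        Pi.smul_apply] at h5
      rw [← hA_def] at h5
      rw [h5]
      exact tsum_congr fun j => by rw [show j + 1 + m = m + 1 + j by omega]
    rw [step1, step2, step3, step4, step5, hS_def]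
    simp [hN_def, ContinuousLinearMap.mul_apply]
  -- the invertible equivalence associated to `S`
  set e : H ≃L[ℂ] H := ContinuousLinearEquiv.unitsEquiv ℂ H hSunit.unit with he_def
  have he : ⇑e = ⇑S := by
    funext v
    rw [he_def, ContinuousLinearEquiv.unitsEquiv_apply, IsUnit.unit_spec]
  -- the orbit of the sum is the image under `S` of the orbit of `T^m x`
  have horb : (fun n : ℕ => (T ^ n) (∑' k : ℕ, α k • (T ^ k) x))
      = fun n : ℕ => S ((T ^ n) ((T ^ m) x)) := by
    funext n
    rw [hy]
    have hc : T ^ n * S = S * T ^ n := (hTS.pow_left n).eq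
    calc (T ^ n) (S ((T ^ m) x)) = (T ^ n * S) ((T ^ m) x) :=
          (ContinuousLinearMap.mul_apply _ _ _).symm
      _ = (S * T ^ n) ((T ^ m) x) := by rw [hc]
      _ = S ((T ^ n) ((T ^ m) x)) := ContinuousLinearMap.mul_apply _ _ _
  -- density of the span of the orbit of `T^m x`
  set srng : Set H := Set.range fun n : ℕ => (T ^ n) ((T ^ m) x) with hsrng_def
  have hdense : closure ((Submodule.span ℂ srng : Submodule ℂ H) : Set H) = Set.univ := by
    have h1 := hcyc (m + 1) (by omega)
    have hle : Submodule.span ℂ (Set.range fun n : ℕ => (T ^ n) ((T ^ (m + 1)) x))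
        ≤ Submodule.span ℂ srng := by
      refine Submodule.span_mono ?_
      rintro _ ⟨n, rfl⟩
      refine ⟨n + 1, ?_⟩
      show (T ^ (n + 1)) ((T ^ m) x) = (T ^ n) ((T ^ (m + 1)) x)
      rw [pow_succ, pow_succ' T m, ContinuousLinearMap.mul_apply,
        ContinuousLinearMap.mul_apply]
    have h2 : (Submodule.span ℂ srng).topologicalClosure = ⊤ :=
      top_unique (h1 ▸ Submodule.topologicalClosure_mono hle)
    rw [← Submodule.topologicalClosure_coe, h2, Submodule.top_coe]
  rw [horb]
  have hrange : (Set.range fun n : ℕ => S ((T ^ n) ((T ^ m) x))) = ⇑S '' srng := by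
    rw [hsrng_def, ← Set.range_comp]
    rfl
  apply SetLike.ext'
  rw [Submodule.topologicalClosure_coe, Submodule.top_coe, hrange]
  have hss : (⇑S '' ((Submodule.span ℂ srng : Submodule ℂ H) : Set H))
      ⊆ ((Submodule.span ℂ (⇑S '' srng) : Submodule ℂ H) : Set H) := by
    rintro _ ⟨v, hv, rfl⟩
    have h3 : S v ∈ Submodule.map (S : H →ₗ[ℂ] H) (Submodule.span ℂ srng) :=
      Submodule.mem_map_of_mem hv
    rw [Submodule.map_span] at h3
    simpa using h3
  apply Set.eq_univ_of_univ_subset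
  calc Set.univ = ⇑e '' Set.univ := by rw [Set.image_univ, e.surjective.range_eq]
    _ = ⇑e '' closure ((Submodule.span ℂ srng : Submodule ℂ H) : Set H) := by rw [hdense]
    _ = closure (⇑e '' ((Submodule.span ℂ srng : Submodule ℂ H) : Set H)) :=
        e.toHomeomorph.image_closure _
    _ ⊆ closure ((Submodule.span ℂ (⇑S '' srng) : Submodule ℂ H) : Set H) := by
        rw [he]
        exact closure_mono hss
end

section
/- Let β = (β_n)_{n≥0} be a sequence of positive real numbers with β₀ = 1 and sup_{n≥0} β_{n+1}/β_n < ∞, and let S_β be the weighted unilateral shift on ℓ² with S_β e_n = (β_{n+1}/β_n) e_{n+1}. Let A be a bounded linear operator on ℓ² such that ∑_{n≥0} (‖A^n‖/β_n)² < ∞. Then for every f ∈ ℓ² there exists a unique bounded operator K on ℓ² satisfying A∘K = K∘S_β and K e₀ = f; moreover this K satisfies K e_n = β_n^{-1} A^n f for all n ≥ 0 and K is a compact operator. -/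
local notation "ℓ²" => lp (fun _ : ℕ => ℂ) 2

namespace Stmt4Aux

lemma summable_sq (x : ℓ²) : Summable fun n => ‖x n‖ ^ 2 := by
  have h := (lp.memℓp x).summable (p := 2) (by norm_num)
  simpa [Real.rpow_natCast] using h

lemma norm_sq_eq (x : ℓ²) : ‖x‖ ^ 2 = ∑' n, ‖x n‖ ^ 2 := by
  have h := lp.norm_rpow_eq_tsum (p := 2) (by norm_num) x
  simpa [Real.rpow_natCast] using h

variable (g : ℕ → ℓ²)

lemma summable_mul (hg : Summable fun n => ‖g n‖ ^ 2) (x : ℓ²) :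
    Summable fun n => ‖x n‖ * ‖g n‖ := by
  refine Summable.of_nonneg_of_le (fun n => by positivity) (fun n => ?_)
    (((summable_sq x).add hg).div_const 2)
  have := sq_nonneg (‖x n‖ - ‖g n‖)
  simp only [Pi.add_apply]
  nlinarith

lemma summable_smul (hg : Summable fun n => ‖g n‖ ^ 2) (x : ℓ²) :
    Summable fun n => x n • g n := by
  apply Summable.of_norm
  simpa [norm_smul] using summable_mul g hg x

lemma tsum_mul_le (hg : Summable fun n => ‖g n‖ ^ 2) (x : ℓ²) :
    ∑' n, ‖x n‖ * ‖g n‖ ≤ ‖x‖ * Real.sqrt (∑' n, ‖g n‖ ^ 2) := by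
  refine Summable.tsum_le_of_sum_le (summable_mul g hg x) fun s => ?_
  calc ∑ n ∈ s, ‖x n‖ * ‖g n‖
      ≤ Real.sqrt (∑ n ∈ s, ‖x n‖ ^ 2) * Real.sqrt (∑ n ∈ s, ‖g n‖ ^ 2) :=
        Real.sum_mul_le_sqrt_mul_sqrt s _ _
    _ ≤ Real.sqrt (∑' n, ‖x n‖ ^ 2) * Real.sqrt (∑' n, ‖g n‖ ^ 2) := by
        gcongr <;>
          exact Summable.sum_le_tsum s (fun n _ => by positivity) (by first | exact summable_sq x | exact hg)
    _ = ‖x‖ * Real.sqrt (∑' n, ‖g n‖ ^ 2) := by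
        rw [← norm_sq_eq x, Real.sqrt_sq (norm_nonneg x)]

/-- The operator `x ↦ ∑' n, x n • g n`. -/
noncomputable def op (hg : Summable fun n => ‖g n‖ ^ 2) : ℓ² →L[ℂ] ℓ² :=
  LinearMap.mkContinuous
    { toFun := fun x => ∑' n, x n • g n
      map_add' := fun x y => by
        simp only [lp.coeFn_add, Pi.add_apply, add_smul]
        exact Summable.tsum_add (summable_smul g hg x) (summable_smul g hg y)
      map_smul' := fun c x => by
        simp only [lp.coeFn_smul, Pi.smul_apply, smul_eq_mul, mul_smul, RingHom.id_apply]
        exact Summable.tsum_const_smul c (summable_smul g hg x) }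
    (Real.sqrt (∑' n, ‖g n‖ ^ 2))
    (fun x => by
      refine le_trans (norm_tsum_le_tsum_norm ?_) ?_
      · simpa [norm_smul] using summable_mul g hg x
      · calc ∑' n, ‖x n • g n‖ = ∑' n, ‖x n‖ * ‖g n‖ := by simp [norm_smul]
          _ ≤ ‖x‖ * Real.sqrt (∑' n, ‖g n‖ ^ 2) := tsum_mul_le g hg x
          _ = Real.sqrt (∑' n, ‖g n‖ ^ 2) * ‖x‖ := mul_comm _ _)

lemma op_apply (hg : Summable fun n => ‖g n‖ ^ 2) (x : ℓ²) :
    op g hg x = ∑' n, x n • g n := rfl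

lemma op_norm_le (hg : Summable fun n => ‖g n‖ ^ 2) :
    ‖op g hg‖ ≤ Real.sqrt (∑' n, ‖g n‖ ^ 2) :=
  LinearMap.mkContinuous_norm_le _ (Real.sqrt_nonneg _) _

lemma op_single (hg : Summable fun n => ‖g n‖ ^ 2) (j : ℕ) (c : ℂ) :
    op g hg (lp.single 2 j c) = c • g j := by
  rw [op_apply]
  rw [tsum_eq_single j]
  · rw [lp.single_apply_self]
  · intro b hb
    simp [lp.single_apply, hb]

noncomputable def coord (n : ℕ) : ℓ² →L[ℂ] ℂ :=
  LinearMap.mkContinuous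
    { toFun := fun x => x n
      map_add' := fun x y => by simp
      map_smul' := fun c x => by simp }
    1 (fun x => by rw [one_mul]; exact lp.norm_apply_le_norm (p := 2) (by norm_num) x n)

lemma ext_single {T T' : ℓ² →L[ℂ] ℓ²}
    (h : ∀ n, T (lp.single 2 n 1) = T' (lp.single 2 n 1)) : T = T' := by
  refine ContinuousLinearMap.ext fun x => ?_
  have hx : HasSum (fun n : ℕ => lp.single 2 n (x n)) x :=
    lp.hasSum_single (by norm_num) x
  have h1 : HasSum (fun n : ℕ => T (lp.single 2 n (x n))) (T x) := T.hasSum hx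
  have h2 : HasSum (fun n : ℕ => T' (lp.single 2 n (x n))) (T' x) := T'.hasSum hx
  have e : ∀ (S : ℓ² →L[ℂ] ℓ²) (n : ℕ),
      S (lp.single 2 n (x n)) = x n • S ((lp.single 2 n (1 : ℂ) : ℓ²)) := by
    intro S n
    have hs : lp.single 2 n (x n) = x n • (lp.single 2 n (1 : ℂ) : ℓ²) := by
      rw [← lp.single_smul]
      norm_num
    rw [hs, map_smul]
  have : (fun n : ℕ => T (lp.single 2 n (x n))) = fun n => T' (lp.single 2 n (x n)) := by
    funext n
    rw [e T n, e T' n, h n]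
  rw [this] at h1
  exact h1.unique h2

end Stmt4Aux

open Stmt4Aux in
set_option maxHeartbeats 1000000 in
/-- Shift representation operators (Proposition 1.6 (1)-(2)).  Given a weighted unilateral
shift `S_β` with weights `β_{n+1}/β_n` (`β₀ = 1`, `sup β_{n+1}/β_n < ∞`) and `A` with
`∑ (‖A^n‖/β_n)² < ∞`, for each `f ∈ ℓ²` there is a unique bounded operator `K` with
`A K = K S_β` and `K e₀ = f`; it satisfies `K e_n = β_n⁻¹ A^n f` and is compact. -/
theorem stmt4
    (β : ℕ → ℝ) (hβpos : ∀ n, 0 < β n) (hβ0 : β 0 = 1)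
    (hβsup : BddAbove (Set.range fun n => β (n + 1) / β n))
    (Sβ : ℓ² →L[ℂ] ℓ²)
    (hSβ : ∀ n : ℕ, Sβ (lp.single 2 n (1 : ℂ)) =
      ((β (n + 1) / β n : ℝ) : ℂ) • lp.single 2 (n + 1) (1 : ℂ))
    (A : ℓ² →L[ℂ] ℓ²) (hsum : Summable fun n : ℕ => (‖A ^ n‖ / β n) ^ 2)
    (f : ℓ²) :
    ∃ K : ℓ² →L[ℂ] ℓ²,
      (A.comp K = K.comp Sβ ∧ K (lp.single 2 0 (1 : ℂ)) = f) ∧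
      (∀ n : ℕ, K (lp.single 2 n (1 : ℂ)) = ((β n : ℂ))⁻¹ • (A ^ n) f) ∧
      IsCompactOperator ⇑K ∧
      ∀ K' : ℓ² →L[ℂ] ℓ²,
        (A.comp K' = K'.comp Sβ ∧ K' (lp.single 2 0 (1 : ℂ)) = f) → K' = K := by
  classical
  have hβne : ∀ n, (β n : ℝ) ≠ 0 := fun n => (hβpos n).ne'
  have hβCne : ∀ n, ((β n : ℝ) : ℂ) ≠ 0 := fun n => Complex.ofReal_ne_zero.mpr (hβne n)
  set g : ℕ → ℓ² := fun n => ((β n : ℂ))⁻¹ • (A ^ n) f with hgdef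
  have hgnorm : ∀ n, ‖g n‖ ≤ ‖A ^ n‖ / β n * ‖f‖ := by
    intro n
    have hn : ‖g n‖ = (β n)⁻¹ * ‖(A ^ n) f‖ := by
      simp only [hgdef]
      rw [norm_smul]
      congr 1
      rw [norm_inv, Complex.norm_real, Real.norm_eq_abs, abs_of_pos (hβpos n)]
    rw [hn, div_eq_inv_mul, mul_assoc]
    gcongr
    · exact inv_nonneg.mpr (hβpos n).le
    · exact (A ^ n).le_opNorm f
  have hg : Summable fun n => ‖g n‖ ^ 2 := by
    refine Summable.of_nonneg_of_le (fun n => sq_nonneg _) (fun n => ?_)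
      (hsum.mul_right (‖f‖ ^ 2))
    calc ‖g n‖ ^ 2 ≤ (‖A ^ n‖ / β n * ‖f‖) ^ 2 :=
          pow_le_pow_left₀ (norm_nonneg _) (hgnorm n) 2
      _ = (‖A ^ n‖ / β n) ^ 2 * ‖f‖ ^ 2 := mul_pow _ _ _
  set K : ℓ² →L[ℂ] ℓ² := op g hg with hKdef
  have hKs : ∀ n, K (lp.single 2 n (1 : ℂ)) = g n := fun n => by
    rw [hKdef, op_single]; exact one_smul _ _
  have hg0 : g 0 = f := by
    simp [hgdef, hβ0]
  have hK0 : K (lp.single 2 0 (1 : ℂ)) = f := by rw [hKs 0, hg0]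
  -- key computation
  have key : ∀ n, A (g n) = ((β (n + 1) / β n : ℝ) : ℂ) • g (n + 1) := by
    intro n
    rw [hgdef]
    simp only [map_smul, smul_smul]
    have hA : A ((A ^ n) f) = (A ^ (n + 1)) f := by
      rw [pow_succ']
      rfl
    rw [hA]
    congr 1
    push_cast
    field_simp
    rw [mul_comm, div_mul_cancel_left₀ (hβCne (n + 1)), one_div]
  have hcomm : A.comp K = K.comp Sβ := by
    apply ext_single
    intro n
    rw [ContinuousLinearMap.comp_apply, ContinuousLinearMap.comp_apply, hKs n, key n, hSβ n,
      map_smul, hKs (n + 1)]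
  -- truncations
  have hgN : ∀ N, Summable fun n => ‖(if n < N then g n else 0 : ℓ²)‖ ^ 2 := by
    intro N
    refine Summable.of_nonneg_of_le (fun n => sq_nonneg _) (fun n => ?_) hg
    split <;> simp [sq_nonneg]
  set KN : ℕ → (ℓ² →L[ℂ] ℓ²) := fun N => op (fun n => if n < N then g n else 0) (hgN N)
    with hKNdef
  have hKNs : ∀ N j, KN N (lp.single 2 j 1) = if j < N then g j else 0 := fun N j => by
    rw [hKNdef]; rw [op_single]; exact one_smul _ _
  have hcompact : ∀ N, IsCompactOperator ⇑(KN N) := by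
    intro N
    induction N with
    | zero =>
      have h0 : KN 0 = 0 := ext_single fun n => by simp [hKNs]
      rw [h0]
      exact isCompactOperator_zero
    | succ N ih =>
      have heq : KN (N + 1) = KN N + (coord N).smulRight (g N) := by
        apply ext_single
        intro j
        rw [hKNs, ContinuousLinearMap.add_apply, hKNs, ContinuousLinearMap.smulRight_apply]
        have hc : coord N (lp.single 2 j (1 : ℂ)) = if N = j then 1 else 0 := by
          have : coord N (lp.single 2 j (1 : ℂ)) = (lp.single 2 j (1 : ℂ) : ℓ²) N := rfl
          rw [this]
          simp [lp.single_apply, Pi.single_apply]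
        rw [hc]
        rcases lt_trichotomy j N with h | h | h
        · rw [if_pos (by omega), if_pos h, if_neg (by omega)]
          simp
        · subst h
          rw [if_pos (by omega), if_neg (by omega), if_pos rfl]
          simp
        · rw [if_neg (by omega), if_neg (by omega), if_neg (by omega)]
          simp
      rw [heq]
      have hr : IsCompactOperator ⇑((coord N).smulRight (g N)) := by
        have h1 : IsCompactOperator fun c : ℂ => c • g N := by
          rw [isCompactOperator_iff_exists_mem_nhds_image_subset_compact]
          exact ⟨Metric.closedBall 0 1, Metric.closedBall_mem_nhds 0 one_pos,
            (fun c : ℂ => c • g N) '' Metric.closedBall 0 1,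
            (isCompact_closedBall (0 : ℂ) 1).image (continuous_id.smul continuous_const),
            Set.Subset.rfl⟩
        exact h1.comp_clm (coord N)
      exact ih.add hr
  -- convergence KN → K
  have hgN' : ∀ N, Summable fun n => ‖(if n < N then 0 else g n : ℓ²)‖ ^ 2 := by
    intro N
    refine Summable.of_nonneg_of_le (fun n => sq_nonneg _) (fun n => ?_) hg
    split <;> simp [sq_nonneg]
  have hdiff : ∀ N, K - KN N = op (fun n => if n < N then 0 else g n) (hgN' N) := by
    intro N
    apply ext_single
    intro j
    rw [ContinuousLinearMap.sub_apply, hKs, hKNs, op_single, one_smul]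
    split <;> simp
  have htail : ∀ N, ‖K - KN N‖ ≤
      Real.sqrt (∑' n, (if n < N then 0 else ‖g n‖ ^ 2)) := by
    intro N
    rw [hdiff N]
    refine (op_norm_le _ _).trans_eq ?_
    congr 1
    refine tsum_congr fun n => ?_
    split <;> simp
  have hsummable_ite : ∀ N, Summable fun n => (if n < N then 0 else ‖g n‖ ^ 2) := by
    intro N
    refine Summable.of_nonneg_of_le (fun n => ?_) (fun n => ?_) hg <;> split <;>
      simp [sq_nonneg]
  have hsplit : ∀ N, (∑' n, (if n < N then 0 else ‖g n‖ ^ 2)) =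
      (∑' n, ‖g n‖ ^ 2) - ∑ n ∈ Finset.range N, ‖g n‖ ^ 2 := by
    intro N
    have hfin : Summable fun n => (if n < N then ‖g n‖ ^ 2 else 0) :=
      summable_of_ne_finset_zero (s := Finset.range N) fun b hb => by
        simp only [Finset.mem_range] at hb
        simp [hb]
    have hsum2 : ∑' n, (if n < N then ‖g n‖ ^ 2 else 0) = ∑ n ∈ Finset.range N, ‖g n‖ ^ 2 := by
      rw [tsum_eq_sum (s := Finset.range N)
        (f := fun n => if n < N then ‖g n‖ ^ 2 else 0)
        (fun b hb => by simp only [Finset.mem_range] at hb; simp [hb])]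
      exact Finset.sum_congr rfl fun b hb => by simp [Finset.mem_range.mp hb]
    have hadd : (∑' n, (if n < N then 0 else ‖g n‖ ^ 2)) +
        (∑' n, (if n < N then ‖g n‖ ^ 2 else 0)) = ∑' n, ‖g n‖ ^ 2 := by
      rw [← Summable.tsum_add (hsummable_ite N) hfin]
      refine tsum_congr fun n => ?_
      split <;> simp
    rw [hsum2] at hadd
    linarith
  have htail0 : Filter.Tendsto (fun N => ∑' n, (if n < N then 0 else ‖g n‖ ^ 2))
      Filter.atTop (nhds 0) := by
    have hpartial : Filter.Tendsto (fun N => ∑ n ∈ Finset.range N, ‖g n‖ ^ 2)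
        Filter.atTop (nhds (∑' n, ‖g n‖ ^ 2)) := hg.hasSum.tendsto_sum_nat
    have := (tendsto_const_nhds (x := ∑' n, ‖g n‖ ^ 2) (f := Filter.atTop (α := ℕ))).sub hpartial
    rw [sub_self] at this
    refine this.congr fun N => (hsplit N).symm
  have hnorm0 : Filter.Tendsto (fun N => ‖K - KN N‖) Filter.atTop (nhds 0) := by
    have hsqrt : Filter.Tendsto (fun N => Real.sqrt (∑' n, (if n < N then 0 else ‖g n‖ ^ 2)))
        Filter.atTop (nhds 0) := by
      have := (Real.continuous_sqrt.tendsto 0).comp htail0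
      simpa [Function.comp_def] using this
    exact squeeze_zero (fun N => norm_nonneg _) htail hsqrt
  have hKNtendsto : Filter.Tendsto KN Filter.atTop (nhds K) := by
    rw [tendsto_iff_norm_sub_tendsto_zero]
    refine hnorm0.congr fun N => ?_
    rw [norm_sub_rev]
  have hKcompact : IsCompactOperator ⇑K :=
    isCompactOperator_of_tendsto hKNtendsto (Filter.Eventually.of_forall hcompact)
  -- uniqueness
  refine ⟨K, ⟨hcomm, hK0⟩, hKs, hKcompact, ?_⟩
  rintro K' ⟨hcomm', hK0'⟩
  apply ext_single
  intro n
  rw [hKs]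
  induction n with
  | zero => rw [hK0', hg0]
  | succ n ih =>
    have h1 : A (K' (lp.single 2 n (1 : ℂ))) = K' (Sβ (lp.single 2 n (1 : ℂ))) := by
      have := congrArg (fun T : ℓ² →L[ℂ] ℓ² => T (lp.single 2 n (1 : ℂ))) hcomm'
      simpa using this
    rw [ih, key n, hSβ n, map_smul] at h1
    have hcne : ((β (n + 1) / β n : ℝ) : ℂ) ≠ 0 := by
      refine Complex.ofReal_ne_zero.mpr ?_
      exact (div_pos (hβpos (n + 1)) (hβpos n)).ne'
    exact (smul_right_injective _ hcne h1).symm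
end

section
/- Let H be a separable infinite-dimensional complex Hilbert space and T an invertible bounded linear operator on H. Suppose there exist a positive integer r, a nonzero complex number λ, and a constant C > 0 such that ‖T^{-n} + λ T^n‖ ≤ C·n^r for all integers n ≥ 1. Then there exists M > 0 such that ‖T^n (I − T²)‖ ≤ M·|n|^{r+2} for every nonzero integer n (where T^n for negative n denotes the corresponding power of T^{-1}). -/
/-!
Write `b n = T⁻ⁿ + λ Tⁿ`, so that `‖b n‖ = O(nʳ)`. For `m ≥ 0` the identity
`λ Tᵐ (I - T²) = T⁻¹ b (m + 1) - b (m + 2)` gives `‖Tᵐ (I - T²)‖ = O(mʳ)`, and then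
`T⁻ᵐ (I - T²) = b m (I - T²) - λ Tᵐ (I - T²)` gives the same bound for negative powers.
Only the fact that `T` is a unit of a normed algebra is used, and the exponent obtained is `r`.
-/

theorem Nat.cast_add_pow_le_mul_pow {m : ℕ} (hm : 1 ≤ m) (k r : ℕ) :
    ((m + k : ℕ) : ℝ) ^ r ≤ ((k : ℝ) + 1) ^ r * (m : ℝ) ^ r := by
  rw [← mul_pow]
  have hm' : (1 : ℝ) ≤ m := by exact_mod_cast hm
  gcongr
  push_cast
  nlinarith

namespace Units

variable {𝕜 R : Type*} [NormedField 𝕜] [NormedRing R] [NormedAlgebra 𝕜 R]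

theorem smul_pow_mul_one_sub_sq (u : Rˣ) (c : 𝕜) (m : ℕ) :
    c • ((u : R) ^ m * (1 - (u : R) ^ 2)) =
      ↑u⁻¹ * ((↑u⁻¹ : R) ^ (m + 1) + c • (u : R) ^ (m + 1)) -
        ((↑u⁻¹ : R) ^ (m + 2) + c • (u : R) ^ (m + 2)) := by
  have hu : (↑u⁻¹ : R) * (u : R) ^ (m + 1) = (u : R) ^ m := by
    rw [pow_succ', ← mul_assoc, inv_mul, one_mul]
  rw [mul_add, mul_smul_comm, hu, ← pow_succ', mul_sub, mul_one, ← pow_add, smul_sub]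
  abel

variable {u : Rˣ} {c : 𝕜} {C : ℝ} {r : ℕ}

theorem norm_pow_mul_one_sub_sq_le (hc : c ≠ 0)
    (hgrowth : ∀ n : ℕ, 1 ≤ n → ‖(↑u⁻¹ : R) ^ n + c • (u : R) ^ n‖ ≤ C * (n : ℝ) ^ r)
    {m : ℕ} (hm : 1 ≤ m) :
    ‖(u : R) ^ m * (1 - (u : R) ^ 2)‖ ≤
      (‖(↑u⁻¹ : R)‖ * 2 ^ r + 3 ^ r) * C / ‖c‖ * (m : ℝ) ^ r := by
  have hC : 0 ≤ C := by simpa using (norm_nonneg _).trans (hgrowth 1 le_rfl)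
  have h₁ : C * ((m + 1 : ℕ) : ℝ) ^ r ≤ C * (2 ^ r * (m : ℝ) ^ r) := by
    gcongr
    exact_mod_cast Nat.cast_add_pow_le_mul_pow hm 1 r
  have h₂ : C * ((m + 2 : ℕ) : ℝ) ^ r ≤ C * (3 ^ r * (m : ℝ) ^ r) := by
    gcongr
    exact_mod_cast Nat.cast_add_pow_le_mul_pow hm 2 r
  have hsmul : ‖c‖ * ‖(u : R) ^ m * (1 - (u : R) ^ 2)‖ ≤
      (‖(↑u⁻¹ : R)‖ * 2 ^ r + 3 ^ r) * C * (m : ℝ) ^ r :=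
    calc ‖c‖ * ‖(u : R) ^ m * (1 - (u : R) ^ 2)‖
        = ‖c • ((u : R) ^ m * (1 - (u : R) ^ 2))‖ := (norm_smul _ _).symm
      _ ≤ ‖(↑u⁻¹ : R)‖ * (C * ((m + 1 : ℕ) : ℝ) ^ r) + C * ((m + 2 : ℕ) : ℝ) ^ r := by
          rw [smul_pow_mul_one_sub_sq]
          refine (norm_sub_le _ _).trans (add_le_add ?_ (hgrowth _ (by omega)))
          exact (norm_mul_le _ _).trans (by gcongr; exact hgrowth _ (by omega))
      _ ≤ ‖(↑u⁻¹ : R)‖ * (C * (2 ^ r * (m : ℝ) ^ r)) + C * (3 ^ r * (m : ℝ) ^ r) := by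
          gcongr
      _ = (‖(↑u⁻¹ : R)‖ * 2 ^ r + 3 ^ r) * C * (m : ℝ) ^ r := by ring
  rw [div_mul_eq_mul_div, le_div_iff₀' (norm_pos_iff.mpr hc)]
  exact hsmul

theorem norm_inv_pow_mul_one_sub_sq_le (hc : c ≠ 0)
    (hgrowth : ∀ n : ℕ, 1 ≤ n → ‖(↑u⁻¹ : R) ^ n + c • (u : R) ^ n‖ ≤ C * (n : ℝ) ^ r)
    {m : ℕ} (hm : 1 ≤ m) :
    ‖(↑u⁻¹ : R) ^ m * (1 - (u : R) ^ 2)‖ ≤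
      (C * ‖1 - (u : R) ^ 2‖ + (‖(↑u⁻¹ : R)‖ * 2 ^ r + 3 ^ r) * C) * (m : ℝ) ^ r := by
  have hsplit : (↑u⁻¹ : R) ^ m * (1 - (u : R) ^ 2) =
      ((↑u⁻¹ : R) ^ m + c • (u : R) ^ m) * (1 - (u : R) ^ 2) -
        c • ((u : R) ^ m * (1 - (u : R) ^ 2)) := by
    rw [add_mul, smul_mul_assoc]
    abel
  have hpos := norm_pow_mul_one_sub_sq_le hc hgrowth hm
  have hc' : 0 < ‖c‖ := norm_pos_iff.mpr hc
  calc ‖(↑u⁻¹ : R) ^ m * (1 - (u : R) ^ 2)‖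
      ≤ ‖(↑u⁻¹ : R) ^ m + c • (u : R) ^ m‖ * ‖1 - (u : R) ^ 2‖ +
          ‖c‖ * ‖(u : R) ^ m * (1 - (u : R) ^ 2)‖ := by
        rw [hsplit, ← norm_smul c]
        exact (norm_sub_le _ _).trans (add_le_add (norm_mul_le _ _) le_rfl)
    _ ≤ C * (m : ℝ) ^ r * ‖1 - (u : R) ^ 2‖ +
          ‖c‖ * ((‖(↑u⁻¹ : R)‖ * 2 ^ r + 3 ^ r) * C / ‖c‖ * (m : ℝ) ^ r) := by
        gcongr
        exact hgrowth m hm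
    _ = (C * ‖1 - (u : R) ^ 2‖ + (‖(↑u⁻¹ : R)‖ * 2 ^ r + 3 ^ r) * C) * (m : ℝ) ^ r := by
        field_simp

theorem exists_norm_zpow_mul_one_sub_sq_le (hc : c ≠ 0)
    (hgrowth : ∀ n : ℕ, 1 ≤ n → ‖(↑u⁻¹ : R) ^ n + c • (u : R) ^ n‖ ≤ C * (n : ℝ) ^ r) :
    ∃ K : ℝ, 0 ≤ K ∧ ∀ n : ℤ, n ≠ 0 →
      ‖((u ^ n : Rˣ) : R) * (1 - (u : R) ^ 2)‖ ≤ K * |(n : ℝ)| ^ r := by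
  set K₁ := (‖(↑u⁻¹ : R)‖ * 2 ^ r + 3 ^ r) * C / ‖c‖
  set K₂ := C * ‖1 - (u : R) ^ 2‖ + (‖(↑u⁻¹ : R)‖ * 2 ^ r + 3 ^ r) * C
  refine ⟨max (max K₁ K₂) 0, le_max_right _ _, fun n hn => ?_⟩
  obtain ⟨m, rfl | rfl⟩ := Int.eq_nat_or_neg n
  all_goals
    have hm : 1 ≤ m := by omega
    simp only [Int.cast_neg, Int.cast_natCast, abs_neg, Nat.abs_cast]
  · rw [zpow_natCast, val_pow_eq_pow_val]
    refine (norm_pow_mul_one_sub_sq_le hc hgrowth hm).trans ?_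
    gcongr
    exact le_max_of_le_left (le_max_left _ _)
  · rw [zpow_neg, zpow_natCast, ← inv_pow, val_pow_eq_pow_val]
    refine (norm_inv_pow_mul_one_sub_sq_le hc hgrowth hm).trans ?_
    gcongr
    exact le_max_of_le_left (le_max_right _ _)

end Units

theorem stmt10_general
    {H : Type*} [NormedAddCommGroup H] [InnerProductSpace ℂ H]
    (T : (H →L[ℂ] H)ˣ) (r : ℕ) (lam : ℂ) (hlam : lam ≠ 0)
    (C : ℝ)
    (hgrowth : ∀ n : ℕ, 1 ≤ n →
      ‖((T⁻¹ ^ n : (H →L[ℂ] H)ˣ) : H →L[ℂ] H)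
        + lam • ((T ^ n : (H →L[ℂ] H)ˣ) : H →L[ℂ] H)‖ ≤ C * (n : ℝ) ^ r) :
    ∃ M : ℝ, 0 < M ∧ ∀ n : ℤ, n ≠ 0 →
      ‖((T ^ n : (H →L[ℂ] H)ˣ) : H →L[ℂ] H) * (1 - ((T : H →L[ℂ] H)) ^ 2)‖
        ≤ M * |(n : ℝ)| ^ (r + 2) := by
  simp only [Units.val_pow_eq_pow_val] at hgrowth
  obtain ⟨K, hK, hbound⟩ := Units.exists_norm_zpow_mul_one_sub_sq_le hlam hgrowth
  refine ⟨K + 1, by positivity, fun n hn => (hbound n hn).trans ?_⟩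
  have h_one_le : (1 : ℝ) ≤ |(n : ℝ)| := by
    rw [← Int.cast_abs]
    exact_mod_cast Int.one_le_abs hn
  gcongr
  · linarith
  · omega

/-- Lemma 2.1.  Let `T` be an invertible operator on a separable infinite-dimensional
complex Hilbert space with `‖T^{-n} + λ T^n‖ ≤ C n^r` for all `n ≥ 1` (with `λ ≠ 0`,
`r ≥ 1`, `C > 0`).  Then there is `M > 0` with `‖T^n (I - T²)‖ ≤ M |n|^{r+2}` for all
nonzero integers `n`. -/
theorem stmt10
    {H : Type*} [NormedAddCommGroup H] [InnerProductSpace ℂ H] [CompleteSpace H]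
    [TopologicalSpace.SeparableSpace H] (hinf : ¬ FiniteDimensional ℂ H)
    (T : (H →L[ℂ] H)ˣ) (r : ℕ) (hr : 0 < r) (lam : ℂ) (hlam : lam ≠ 0)
    (C : ℝ) (hC : 0 < C)
    (hgrowth : ∀ n : ℕ, 1 ≤ n →
      ‖((T⁻¹ ^ n : (H →L[ℂ] H)ˣ) : H →L[ℂ] H)
        + lam • ((T ^ n : (H →L[ℂ] H)ˣ) : H →L[ℂ] H)‖ ≤ C * (n : ℝ) ^ r) :
    ∃ M : ℝ, 0 < M ∧ ∀ n : ℤ, n ≠ 0 →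
      ‖((T ^ n : (H →L[ℂ] H)ˣ) : H →L[ℂ] H) * (1 - ((T : H →L[ℂ] H)) ^ 2)‖
        ≤ M * |(n : ℝ)| ^ (r + 2) :=
  stmt10_general T r lam hlam C hgrowth
end

section
/- Let H be a separable infinite-dimensional complex Hilbert space, T an invertible bounded linear operator on H, and x ∈ H. Suppose there exist a positive integer r, a nonzero complex number λ, and a constant C > 0 such that ‖(T^{-n} + λ T^n)x‖ ≤ C·n^r for all integers n ≥ 1. Then there exists M > 0 such that ‖T^n (I − T²) x‖ ≤ M·|n|^{r+2} for every nonzero integer n (where T^n for negative n denotes the corresponding power of T^{-1}). -/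
/-!
Write `y n = T^n x` and `b n = y (-n) + λ y n`, so that the hypothesis says `b n = O(n^r)` as
`n → +∞`. The identity `λ (y n - y (n+2)) = b n - T b (n+1)` bounds `y n - y (n+2)` as
`n → +∞`, and `y (-n) - y (-n+2) = λ (y (n-2) - y n) - (b (n-2) - b n)` transfers the bound to
`n → -∞`. The remaining finitely many `n ≠ 0` only enlarge the constant.
-/

open Filter Asymptotics

section
variable {E : Type*} [NormedAddCommGroup E]

theorem isBigO_atTop_comp_add_const {φ : ℤ → E} {r : ℕ}
    (h : φ =O[atTop] fun n : ℤ => (n : ℝ) ^ r) (k : ℤ) :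
    (fun n => φ (n + k)) =O[atTop] fun n : ℤ => (n : ℝ) ^ r := by
  have hlin : (fun n : ℤ => (n : ℝ) + k) =O[atTop] fun n : ℤ => (n : ℝ) :=
    (isBigO_refl _ _).add
      ((isLittleO_const_id_atTop (k : ℝ)).isBigO.comp_tendsto tendsto_intCast_atTop_atTop)
  refine (h.comp_tendsto (tendsto_atTop_add_const_right _ k tendsto_id)).trans ?_
  simpa only [Function.comp_def, id, Int.cast_add] using hlin.pow r

theorem isBigO_atBot_of_comp_neg {φ : ℤ → E} {r : ℕ}
    (h : (fun n => φ (-n)) =O[atTop] fun n : ℤ => (n : ℝ) ^ r) :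
    φ =O[atBot] fun n : ℤ => (n : ℝ) ^ r := by
  refine IsBigO.of_norm_right ?_
  simpa only [Function.comp_def, neg_neg, Int.cast_neg, norm_pow, norm_neg]
    using (h.comp_tendsto tendsto_neg_atBot_atTop).norm_right
end

section
variable {R M : Type*} [CommRing R] [AddCommGroup M] [Module R M]

theorem sub_neg_add_two_eq (y : ℤ → M) (c : R) (n : ℤ) :
    y (-n) - y (-n + 2) = c • (y (n + -2) - y (n + -2 + 2))
      - ((y (-(n + -2)) + c • y (n + -2)) - (y (-n) + c • y n)) := by
  rw [show n + -2 + 2 = n by ring, show -(n + -2) = -n + 2 by ring]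
  module
end

section
variable {𝕜 E : Type*} [NontriviallyNormedField 𝕜] [NormedAddCommGroup E] [NormedSpace 𝕜 E]

theorem smul_sub_add_two_eq (T : E →L[𝕜] E) {y : ℤ → E} (hy : ∀ n, T (y n) = y (n + 1))
    (c : 𝕜) (n : ℤ) :
    c • (y n - y (n + 2)) = (y (-n) + c • y n) - T (y (-(n + 1)) + c • y (n + 1)) := by
  rw [map_add, map_smul, hy, hy, show -(n + 1) + 1 = -n by ring, show n + 1 + 1 = n + 2 by ring]
  module

theorem isBigO_cofinite_sub_add_two (T : E →L[𝕜] E) {y : ℤ → E}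
    (hy : ∀ n, T (y n) = y (n + 1)) {c : 𝕜} (hc : c ≠ 0) {r : ℕ}
    (hb : (fun n => y (-n) + c • y n) =O[atTop] fun n : ℤ => (n : ℝ) ^ r) :
    (fun n => y n - y (n + 2)) =O[cofinite] fun n : ℤ => (n : ℝ) ^ r := by
  have htop : (fun n => y n - y (n + 2)) =O[atTop] fun n : ℤ => (n : ℝ) ^ r := by
    have h := (hb.sub ((T.isBigO_comp _ _).trans
      (isBigO_atTop_comp_add_const hb 1))).const_smul_left c⁻¹
    refine h.congr_left fun n => ?_
    rw [Pi.smul_apply, ← smul_sub_add_two_eq T hy, inv_smul_smul₀ hc]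
  rw [Int.cofinite_eq]
  refine IsBigO.sup (isBigO_atBot_of_comp_neg ?_) htop
  have h := ((isBigO_atTop_comp_add_const htop (-2)).const_smul_left c).sub
    ((isBigO_atTop_comp_add_const hb (-2)).sub hb)
  exact h.congr_left fun n => (sub_neg_add_two_eq y c n).symm
end

theorem stmt11_general
    {H : Type*} [NormedAddCommGroup H] [InnerProductSpace ℂ H]
    (T : (H →L[ℂ] H)ˣ) (x : H) (r : ℕ) (lam : ℂ) (hlam : lam ≠ 0)
    (C : ℝ)
    (hgrowth : ∀ n : ℕ, 1 ≤ n →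
      ‖(((T⁻¹ ^ n : (H →L[ℂ] H)ˣ) : H →L[ℂ] H)
        + lam • ((T ^ n : (H →L[ℂ] H)ˣ) : H →L[ℂ] H)) x‖ ≤ C * (n : ℝ) ^ r) :
    ∃ M : ℝ, 0 < M ∧ ∀ n : ℤ, n ≠ 0 →
      ‖((((T ^ n : (H →L[ℂ] H)ˣ) : H →L[ℂ] H) * (1 - ((T : H →L[ℂ] H)) ^ 2) : H →L[ℂ] H)) x‖
        ≤ M * |(n : ℝ)| ^ (r + 2) := by
  set y : ℤ → H := fun n => ((T ^ n : (H →L[ℂ] H)ˣ) : H →L[ℂ] H) x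
  have hshift : ∀ n, (T : H →L[ℂ] H) (y n) = y (n + 1) := fun n => by
    simp only [y]
    rw [add_comm, zpow_add, zpow_one, Units.val_mul, mul_apply_eq_comp]
  have hb : (fun n => y (-n) + lam • y n) =O[atTop] fun n : ℤ => (n : ℝ) ^ r := by
    refine IsBigO.of_bound C ?_
    filter_upwards [eventually_ge_atTop 1] with n hn
    lift n to ℕ using by omega
    simpa [y, zpow_neg, inv_pow] using hgrowth n (by exact_mod_cast hn)
  obtain ⟨M, hM, hbound⟩ := bound_of_isBigO_cofinite
    (isBigO_cofinite_sub_add_two (T : H →L[ℂ] H) hshift hlam hb)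
  refine ⟨M, hM, fun n hn => ?_⟩
  have hn1 : 1 ≤ |(n : ℝ)| := by exact_mod_cast Int.one_le_abs hn
  calc _ = ‖y n - y (n + 2)‖ := by simp [y, zpow_add, mul_sub]
    _ ≤ M * |(n : ℝ)| ^ r := by simpa using hbound (pow_ne_zero r (Int.cast_ne_zero.mpr hn))
    _ ≤ M * |(n : ℝ)| ^ (r + 2) :=
        mul_le_mul_of_nonneg_left (pow_le_pow_right₀ hn1 (by omega)) hM.le

/-- Corollary 2.2 (local version of Lemma 2.1).  If `‖(T^{-n} + λ T^n)x‖ ≤ C n^r` for all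
`n ≥ 1`, then there is `M > 0` with `‖T^n (I - T²) x‖ ≤ M |n|^{r+2}` for all nonzero
integers `n`. -/
theorem stmt11
    {H : Type*} [NormedAddCommGroup H] [InnerProductSpace ℂ H] [CompleteSpace H]
    [TopologicalSpace.SeparableSpace H] (hinf : ¬ FiniteDimensional ℂ H)
    (T : (H →L[ℂ] H)ˣ) (x : H) (r : ℕ) (hr : 0 < r) (lam : ℂ) (hlam : lam ≠ 0)
    (C : ℝ) (hC : 0 < C)
    (hgrowth : ∀ n : ℕ, 1 ≤ n →
      ‖(((T⁻¹ ^ n : (H →L[ℂ] H)ˣ) : H →L[ℂ] H)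
        + lam • ((T ^ n : (H →L[ℂ] H)ˣ) : H →L[ℂ] H)) x‖ ≤ C * (n : ℝ) ^ r) :
    ∃ M : ℝ, 0 < M ∧ ∀ n : ℤ, n ≠ 0 →
      ‖((((T ^ n : (H →L[ℂ] H)ˣ) : H →L[ℂ] H) * (1 - ((T : H →L[ℂ] H)) ^ 2) : H →L[ℂ] H)) x‖
        ≤ M * |(n : ℝ)| ^ (r + 2) :=
  stmt11_general T x r lam hlam C hgrowth
end

section
/- Let A be a bounded linear operator on ℓ² with spectral radius r(A) < 1. Then A is intransitive if and only if there exist nonzero vectors f, g ∈ ℓ² such that the power series ν(z) = ∑_{n≥0} ⟨A^n f, g⟩ z^n is a rational function, i.e., there exist polynomials p, q with complex coefficients, q ≠ 0, such that q(z)·∑_{n≥0} ⟨A^n f, g⟩ z^n = p(z) for all complex z with |z| < 1. -/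
local notation "ℓ²" => lp (fun _ : ℕ => ℂ) 2

open Polynomial Finset Filter ENNReal NNReal

noncomputable section

set_option maxHeartbeats 1000000

lemma coeff_eq_zero_of_tsum_eq_zero (D : ℕ → ℂ) (C : ℝ) (hC : ∀ n, ‖D n‖ ≤ C)
    (h : ∀ z : ℂ, ‖z‖ < 1 → ∑' n, D n * z ^ n = 0) : ∀ n, D n = 0 := by
  have hC0 : 0 ≤ C := le_trans (norm_nonneg _) (hC 0)
  set P : FormalMultilinearSeries ℂ ℂ ℂ :=
    fun n => ContinuousMultilinearMap.mkPiRing ℂ (Fin n) (D n) with hP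
  have hPn : ∀ n, ‖P n‖ = ‖D n‖ := fun n => ContinuousMultilinearMap.norm_mkPiRing ..
  have hrad : 1 ≤ P.radius := by
    apply ENNReal.le_of_forall_nnreal_lt
    intro r hr
    apply P.le_radius_of_bound C
    intro n
    rw [hPn]
    calc ‖D n‖ * (r : ℝ) ^ n ≤ C * 1 := by
          refine mul_le_mul (hC n) ?_ (by positivity) hC0
          exact pow_le_one₀ r.coe_nonneg (le_of_lt (by exact_mod_cast hr))
      _ = C := mul_one C
  have hsum : ∀ y : ℂ, ‖y‖ < 1 → Summable (fun n => D n * y ^ n) := by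
    intro y hy
    refine Summable.of_norm (Summable.of_nonneg_of_le (fun n => norm_nonneg _) (fun n => ?_)
      ((summable_geometric_of_lt_one (norm_nonneg y) hy).mul_left C))
    rw [norm_mul, norm_pow]
    exact mul_le_mul_of_nonneg_right (hC n) (by positivity)
  have hball : HasFPowerSeriesOnBall (fun z : ℂ => ∑' n, D n * z ^ n) P 0 1 := by
    refine ⟨hrad, one_pos, ?_⟩
    intro y hy
    rw [EMetric.mem_ball, edist_zero_right, enorm_eq_nnnorm, ← ENNReal.coe_one, ENNReal.coe_lt_coe,
      ← NNReal.coe_lt_coe] at hy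
    have hy' : ‖y‖ < 1 := by simpa using hy
    have := (hsum y hy').hasSum
    rw [zero_add]
    convert this using 2 with n
    · rfl
    simp [hP, ContinuousMultilinearMap.mkPiRing_apply, mul_comm, Finset.prod_const]
  have hPzero : P = 0 := by
    refine HasFPowerSeriesAt.eq_zero (x := (0:ℂ)) ?_
    refine (hball.hasFPowerSeriesAt).congr ?_
    refine Filter.eventuallyEq_of_mem (Metric.ball_mem_nhds (0:ℂ) one_pos) (fun z hz => ?_)
    exact h z (by simpa [mem_ball_zero_iff] using hz)
  intro n
  have := congrArg (fun Q : FormalMultilinearSeries ℂ ℂ ℂ => Q n (fun _ => (1:ℂ))) hPzero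
  simpa [hP, ContinuousMultilinearMap.mkPiRing_apply] using this

def e₀ : ℓ² := lp.single 2 0 1
def e₁ : ℓ² := lp.single 2 1 1

lemma e₀_ne_zero : e₀ ≠ 0 := by
  intro h
  have := congrArg (fun x : ℓ² => (x : ∀ _ : ℕ, ℂ) 0) h
  simp [e₀, lp.single_apply_self] at this

lemma e₁_not_mem_span : e₁ ∉ Submodule.span ℂ ({e₀} : Set ℓ²) := by
  intro h
  obtain ⟨a, ha⟩ := Submodule.mem_span_singleton.mp h
  have h1 := congrArg (fun x : ℓ² => (x : ∀ _ : ℕ, ℂ) 1) ha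
  simp only [lp.coeFn_smul, Pi.smul_apply] at h1
  rw [show ((e₀ : ∀ _ : ℕ, ℂ) 1) = 0 from lp.single_apply_ne 2 0 1 (by norm_num),
    show ((e₁ : ∀ _ : ℕ, ℂ) 1) = 1 from lp.single_apply_self 2 1 1] at h1
  simp at h1

lemma exists_eigen (A : ℓ² →L[ℂ] ℓ²) :
    ∀ (n : ℕ) (R : Polynomial ℂ), R.natDegree ≤ n → R ≠ 0 → Polynomial.aeval A R = 0 →
      ∃ (lam : ℂ) (x : ℓ²), x ≠ 0 ∧ A x = lam • x := by
  have base : ∀ R : Polynomial ℂ, R.natDegree = 0 → R ≠ 0 → Polynomial.aeval A R ≠ 0 := by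
    intro R hd hR h0
    obtain ⟨a, rfl⟩ := Polynomial.natDegree_eq_zero.mp hd
    have ha : a ≠ 0 := fun h => hR (by simp [h])
    have : (Polynomial.aeval A (C a)) e₀ = a • e₀ := by
      simp [Polynomial.aeval_C, Algebra.algebraMap_eq_smul_one]
    rw [h0] at this
    exact e₀_ne_zero (by simpa [ha] using this.symm)
  intro n
  induction n with
  | zero =>
    intro R hdeg hR h0
    exact absurd h0 (base R (Nat.le_zero.mp hdeg) hR)
  | succ n ih =>
    intro R hdeg hR h0
    by_cases hd : R.natDegree = 0
    · exact absurd h0 (base R hd hR)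
    · have hdegpos : R.degree ≠ 0 := by
        rw [Polynomial.degree_eq_natDegree hR]
        exact_mod_cast hd
      obtain ⟨lam, hroot⟩ := Complex.isAlgClosed.exists_root R hdegpos
      obtain ⟨S, hS⟩ := Polynomial.dvd_iff_isRoot.mpr hroot
      have hS0 : S ≠ 0 := fun h => hR (by simp [hS, h])
      have hdS : S.natDegree ≤ n := by
        have : R.natDegree = 1 + S.natDegree := by
          rw [hS, Polynomial.natDegree_mul (Polynomial.X_sub_C_ne_zero lam) hS0,
            Polynomial.natDegree_X_sub_C]
        omega
      by_cases hSa : Polynomial.aeval A S = 0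
      · exact ih S hdS hS0 hSa
      · obtain ⟨x, hx⟩ : ∃ x, (Polynomial.aeval A S) x ≠ 0 := by
          by_contra hcon
          push_neg at hcon
          exact hSa (ContinuousLinearMap.ext fun x => by simp [hcon x])
        refine ⟨lam, (Polynomial.aeval A S) x, hx, ?_⟩
        have h1 : (Polynomial.aeval A R) x = 0 := by rw [h0]; rfl
        rw [hS, map_mul, ContinuousLinearMap.mul_apply, map_sub, Polynomial.aeval_X,
          Polynomial.aeval_C, Algebra.algebraMap_eq_smul_one, ContinuousLinearMap.sub_apply,
          ContinuousLinearMap.smul_apply, ContinuousLinearMap.one_apply, sub_eq_zero] at h1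
        exact h1

lemma pow_norm_bounded (A : ℓ² →L[ℂ] ℓ²) (hr : spectralRadius ℂ A < 1) :
    ∃ C : ℝ, 0 ≤ C ∧ ∀ n : ℕ, ‖(A ^ n : ℓ² →L[ℂ] ℓ²)‖ ≤ C := by
  have h := spectrum.pow_nnnorm_pow_one_div_tendsto_nhds_spectralRadius A
  have hev : ∀ᶠ n : ℕ in atTop, (‖A ^ n‖₊ : ℝ≥0∞) ^ (1 / (n : ℝ)) < 1 := h.eventually_lt_const hr
  obtain ⟨N, hN⟩ := eventually_atTop.mp hev
  refine ⟨max 1 (((Finset.range (N + 1)).sup fun n => ‖A ^ n‖₊ : ℝ≥0) : ℝ), by positivity, ?_⟩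
  intro n
  rcases le_or_gt n N with hn | hn
  · refine le_trans ?_ (le_max_right _ _)
    have : ‖A ^ n‖₊ ≤ (Finset.range (N + 1)).sup fun n => ‖A ^ n‖₊ :=
      Finset.le_sup (f := fun n => ‖A ^ n‖₊) (Finset.mem_range.mpr (Nat.lt_succ_of_le hn))
    exact_mod_cast this
  · refine le_trans ?_ (le_max_left _ _)
    have hn1 : (1:ℕ) ≤ n := by omega
    have h1 := hN n (by omega)
    have h2 : ((‖A ^ n‖₊ : ℝ≥0∞) ^ (1 / (n : ℝ))) ^ (n : ℝ) ≤ (1 : ℝ≥0∞) ^ (n : ℝ) :=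
      ENNReal.rpow_le_rpow h1.le (by positivity)
    rw [← ENNReal.rpow_mul, one_div, inv_mul_cancel₀ (by exact_mod_cast by omega : (n:ℝ) ≠ 0),
      ENNReal.rpow_one, ENNReal.one_rpow] at h2
    have : ‖A ^ n‖₊ ≤ 1 := by exact_mod_cast h2
    exact_mod_cast this

lemma forward_dir (A : ℓ² →L[ℂ] ℓ²)
    (h : ∃ M : Submodule ℂ ℓ², IsClosed (M : Set ℓ²) ∧ M ≠ ⊥ ∧ M ≠ ⊤ ∧ ∀ x ∈ M, A x ∈ M) :
    (∃ f g : ℓ², f ≠ 0 ∧ g ≠ 0 ∧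
        ∃ p q : Polynomial ℂ, q ≠ 0 ∧
          ∀ z : ℂ, ‖z‖ < 1 →
            q.eval z * ∑' n : ℕ, (inner ℂ g ((A ^ n) f) : ℂ) * z ^ n = p.eval z) := by
  obtain ⟨M, hMc, hMb, hMt, hMi⟩ := h
  haveI : CompleteSpace M := hMc.completeSpace_coe
  obtain ⟨f, hfM, hf0⟩ := Submodule.exists_mem_ne_zero_of_ne_bot hMb
  have horth : Mᗮ ≠ ⊥ := fun h => hMt (Submodule.orthogonal_eq_bot_iff.mp h)
  obtain ⟨g, hgM, hg0⟩ := Submodule.exists_mem_ne_zero_of_ne_bot horth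
  have hAnf : ∀ n : ℕ, (A ^ n) f ∈ M := by
    intro n
    induction n with
    | zero => simpa using hfM
    | succ n ihn =>
      rw [pow_succ', ContinuousLinearMap.mul_apply]
      exact hMi _ ihn
  have hc : ∀ n : ℕ, (inner ℂ g ((A ^ n) f) : ℂ) = 0 := fun n =>
    (Submodule.mem_orthogonal' M g).mp hgM _ (hAnf n)
  refine ⟨f, g, hf0, hg0, 0, 1, one_ne_zero, fun z hz => ?_⟩
  simp only [hc, zero_mul, tsum_zero, mul_zero, Polynomial.eval_zero]

lemma backward_dir (A : ℓ² →L[ℂ] ℓ²) (hr : spectralRadius ℂ A < 1)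
    (f g : ℓ²) (hf0 : f ≠ 0) (hg0 : g ≠ 0) (p q : Polynomial ℂ) (hq : q ≠ 0)
    (hz : ∀ z : ℂ, ‖z‖ < 1 →
      q.eval z * ∑' n : ℕ, (inner ℂ g ((A ^ n) f) : ℂ) * z ^ n = p.eval z) :
    (∃ M : Submodule ℂ ℓ², IsClosed (M : Set ℓ²) ∧ M ≠ ⊥ ∧ M ≠ ⊤ ∧ ∀ x ∈ M, A x ∈ M) := by
  classical
  set c : ℕ → ℂ := fun n => (inner ℂ g ((A ^ n) f) : ℂ) with hcdef
  -- boundedness of coefficients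
  obtain ⟨CA, hCA0, hCA⟩ := pow_norm_bounded A hr
  set Cb : ℝ := ‖g‖ * (CA * ‖f‖) with hCdef
  have hC0 : 0 ≤ Cb := by positivity
  have hc : ∀ n, ‖c n‖ ≤ Cb := by
    intro n
    calc ‖c n‖ ≤ ‖g‖ * ‖(A ^ n) f‖ := norm_inner_le_norm _ _
      _ ≤ ‖g‖ * (‖(A ^ n : ℓ² →L[ℂ] ℓ²)‖ * ‖f‖) := by
          exact mul_le_mul_of_nonneg_left ((A ^ n).le_opNorm f) (norm_nonneg g)
      _ ≤ Cb := by
          refine mul_le_mul_of_nonneg_left ?_ (norm_nonneg g)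
          exact mul_le_mul_of_nonneg_right (hCA n) (norm_nonneg f)
  -- convolution coefficients
  set conv : ℕ → ℂ := fun n => ∑ kl ∈ Finset.HasAntidiagonal.antidiagonal n, q.coeff kl.1 * c kl.2 with hconvdef
  set D : ℕ → ℂ := fun n => conv n - p.coeff n with hDdef
  have hsummc : ∀ z : ℂ, ‖z‖ < 1 → Summable (fun n => ‖c n * z ^ n‖) := by
    intro z hzn
    refine Summable.of_nonneg_of_le (fun n => norm_nonneg _) (fun n => ?_)
      ((summable_geometric_of_lt_one (norm_nonneg z) hzn).mul_left Cb)
    rw [norm_mul, norm_pow]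
    exact mul_le_mul_of_nonneg_right (hc n) (by positivity)
  have hqfin : ∀ z : ℂ, ∀ n ∉ Finset.range (q.natDegree + 1), q.coeff n * z ^ n = 0 := by
    intro z n hn
    rw [q.coeff_eq_zero_of_natDegree_lt (by simpa using Finset.mem_range.not.mp hn), zero_mul]
  have hpfin : ∀ z : ℂ, ∀ n ∉ Finset.range (p.natDegree + 1), p.coeff n * z ^ n = 0 := by
    intro z n hn
    rw [p.coeff_eq_zero_of_natDegree_lt (by simpa using Finset.mem_range.not.mp hn), zero_mul]
  -- the power series with coefficients D vanishes on the unit ball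
  have hDz : ∀ z : ℂ, ‖z‖ < 1 → ∑' n, D n * z ^ n = 0 := by
    intro z hzn
    have hsq : Summable (fun n => ‖q.coeff n * z ^ n‖) :=
      summable_of_ne_finset_zero (s := Finset.range (q.natDegree + 1))
        (fun n hn => by rw [hqfin z n hn, norm_zero])
    have hcauchy := tsum_mul_tsum_eq_tsum_sum_antidiagonal_of_summable_norm hsq (hsummc z hzn)
    have hqeval : ∑' n, q.coeff n * z ^ n = q.eval z := by
      rw [tsum_eq_sum (hqfin z), Polynomial.eval_eq_sum_range]
    have hpeval : ∑' n, p.coeff n * z ^ n = p.eval z := by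
      rw [tsum_eq_sum (hpfin z), Polynomial.eval_eq_sum_range]
    have hinner : ∀ n : ℕ,
        (∑ kl ∈ Finset.HasAntidiagonal.antidiagonal n, (q.coeff kl.1 * z ^ kl.1) * (c kl.2 * z ^ kl.2))
          = conv n * z ^ n := by
      intro n
      rw [hconvdef, Finset.sum_mul]
      refine Finset.sum_congr rfl fun kl hkl => ?_
      have : kl.1 + kl.2 = n := Finset.HasAntidiagonal.mem_antidiagonal.mp hkl
      rw [← this, pow_add]; ring
    have hsconv : Summable (fun n => conv n * z ^ n) := by
      have := (summable_norm_sum_mul_antidiagonal_of_summable_norm hsq (hsummc z hzn)).of_norm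
      exact (summable_congr hinner).mp this
    have hsp : Summable (fun n => p.coeff n * z ^ n) :=
      summable_of_ne_finset_zero (s := Finset.range (p.natDegree + 1)) (hpfin z)
    have hconvsum : ∑' n, conv n * z ^ n = q.eval z * ∑' n, c n * z ^ n := by
      rw [← hqeval, hcauchy]
      exact (tsum_congr hinner).symm
    calc ∑' n, D n * z ^ n = ∑' n, (conv n * z ^ n - p.coeff n * z ^ n) := by
          refine tsum_congr fun n => ?_
          rw [hDdef]; ring
      _ = (∑' n, conv n * z ^ n) - ∑' n, p.coeff n * z ^ n := Summable.tsum_sub hsconv hsp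
      _ = q.eval z * (∑' n, c n * z ^ n) - p.eval z := by rw [hconvsum, hpeval]
      _ = 0 := by rw [hz z hzn, sub_self]
  -- D is bounded
  set Cq : ℝ := ∑' n, ‖q.coeff n‖ with hCqdef
  have hsq' : Summable (fun n => ‖q.coeff n‖) :=
    summable_of_ne_finset_zero (s := Finset.range (q.natDegree + 1))
      (fun n hn => by
        rw [q.coeff_eq_zero_of_natDegree_lt (by simpa using Finset.mem_range.not.mp hn), norm_zero])
  set Cp : ℝ := ∑' n, ‖p.coeff n‖ with hCpdef
  have hsp' : Summable (fun n => ‖p.coeff n‖) :=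
    summable_of_ne_finset_zero (s := Finset.range (p.natDegree + 1))
      (fun n hn => by
        rw [p.coeff_eq_zero_of_natDegree_lt (by simpa using Finset.mem_range.not.mp hn), norm_zero])
  have hDbound : ∀ n, ‖D n‖ ≤ Cq * Cb + Cp := by
    intro n
    have h1 : ‖conv n‖ ≤ Cq * Cb := by
      calc ‖conv n‖ ≤ ∑ kl ∈ Finset.HasAntidiagonal.antidiagonal n, ‖q.coeff kl.1 * c kl.2‖ :=
            norm_sum_le _ _
        _ ≤ ∑ kl ∈ Finset.HasAntidiagonal.antidiagonal n, ‖q.coeff kl.1‖ * Cb := by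
            refine Finset.sum_le_sum fun kl _ => ?_
            rw [norm_mul]
            exact mul_le_mul_of_nonneg_left (hc kl.2) (norm_nonneg _)
        _ = (∑ kl ∈ Finset.HasAntidiagonal.antidiagonal n, ‖q.coeff kl.1‖) * Cb := by rw [Finset.sum_mul]
        _ ≤ Cq * Cb := by
            refine mul_le_mul_of_nonneg_right ?_ hC0
            rw [Finset.Nat.sum_antidiagonal_eq_sum_range_succ_mk]
            exact Summable.sum_le_tsum _ (fun b _ => norm_nonneg _) hsq'
    have h2 : ‖p.coeff n‖ ≤ Cp := Summable.le_tsum hsp' n (fun b _ => norm_nonneg _)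
    calc ‖D n‖ ≤ ‖conv n‖ + ‖p.coeff n‖ := norm_sub_le _ _
      _ ≤ Cq * Cb + Cp := add_le_add h1 h2
  have hD0 : ∀ n, D n = 0 := coeff_eq_zero_of_tsum_eq_zero D _ hDbound hDz
  -- key orthogonality relation
  set dq : ℕ := q.natDegree with hdqdef
  have hkey : ∀ n : ℕ, dq ≤ n → p.natDegree < n →
      ∑ a ∈ Finset.range (dq + 1), q.coeff a * c (n - a) = 0 := by
    intro n hn1 hn2
    have h1 : conv n = p.coeff n := by
      have := hD0 n
      rw [hDdef] at this
      linear_combination this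
    have h2 : conv n = ∑ a ∈ Finset.range (n + 1), q.coeff a * c (n - a) := by
      simp only [hconvdef]
      exact Finset.Nat.sum_antidiagonal_eq_sum_range_succ_mk _ n
    have h3 : ∑ a ∈ Finset.range (n + 1), q.coeff a * c (n - a)
        = ∑ a ∈ Finset.range (dq + 1), q.coeff a * c (n - a) := by
      refine (Finset.sum_subset (by
        intro a ha
        simp only [Finset.mem_range] at *
        omega) ?_).symm
      intro a _ ha
      rw [q.coeff_eq_zero_of_natDegree_lt (by simpa using Finset.mem_range.not.mp ha), zero_mul]
    rw [← h3, ← h2, h1, p.coeff_eq_zero_of_natDegree_lt hn2]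
  -- the vector w and its orthogonality to the orbit of g
  set k0 : ℕ := p.natDegree + 1 with hk0def
  set S : ℓ² →L[ℂ] ℓ² := ∑ a ∈ Finset.range (dq + 1), q.coeff a • (A ^ (dq - a)) with hSdef
  set w : ℓ² := (A ^ k0) (S f) with hwdef
  have hpowpow : ∀ (m l : ℕ) (x : ℓ²), (A ^ m) ((A ^ l) x) = (A ^ (m + l)) x := by
    intro m l x
    rw [pow_add, ContinuousLinearMap.mul_apply]
  have hw : ∀ k : ℕ, (inner ℂ g ((A ^ k) w) : ℂ) = 0 := by
    intro k
    have hSf : S f = ∑ a ∈ Finset.range (dq + 1), q.coeff a • ((A ^ (dq - a)) f) := by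
      simp only [hSdef, ContinuousLinearMap.sum_apply, ContinuousLinearMap.smul_apply]
    have e1 : (A ^ k) w
        = ∑ a ∈ Finset.range (dq + 1), q.coeff a • ((A ^ ((k + k0 + dq) - a)) f) := by
      rw [hwdef, hpowpow, hSf, map_sum]
      refine Finset.sum_congr rfl fun a ha => ?_
      have haq : a ≤ dq := by simpa [Nat.lt_succ_iff] using Finset.mem_range.mp ha
      have hae : k + k0 + (dq - a) = k + k0 + dq - a := by omega
      rw [map_smul, hpowpow, hae]
    rw [e1, inner_sum]
    have e2 : ∀ a ∈ Finset.range (dq + 1),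
        (inner ℂ g (q.coeff a • ((A ^ ((k + k0 + dq) - a)) f)) : ℂ)
          = q.coeff a * c ((k + k0 + dq) - a) := by
      intro a _
      rw [inner_smul_right]
    rw [Finset.sum_congr rfl e2]
    exact hkey (k + k0 + dq) (by omega) (by omega)
  rcases eq_or_ne w 0 with hww | hww
  · -- w = 0 : kernel of B = A^k0 * S, or eigenvector route
    set B : ℓ² →L[ℂ] ℓ²:= (A ^ k0) * S with hB
    have hBf : B f = 0 := by
      rw [hB, ContinuousLinearMap.mul_apply]
      exact hww
    have hcomm : Commute A B := by
      refine Commute.mul_right ((Commute.refl A).pow_right k0) ?_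
      rw [hSdef]
      exact Commute.sum_right _ _ _ fun a _ => ((Commute.refl A).pow_right _).smul_right _
    set K : Submodule ℂ ℓ² := LinearMap.ker (B : ℓ² →ₗ[ℂ] ℓ²) with hKdef
    have hKclosed : IsClosed (K : Set ℓ²) := ContinuousLinearMap.isClosed_ker B
    have hfK : f ∈ K := LinearMap.mem_ker.mpr hBf
    have hKinv : ∀ x ∈ K, A x ∈ K := by
      intro x hx
      rw [hKdef, LinearMap.mem_ker, ContinuousLinearMap.coe_coe] at hx ⊢
      rw [← ContinuousLinearMap.mul_apply, ← hcomm.eq, ContinuousLinearMap.mul_apply, hx,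
        map_zero]
    rcases eq_or_ne K ⊤ with hKtop | hKtop
    · -- B = 0, A is algebraic, take an eigenspace
      have hB0 : B = 0 := by
        refine ContinuousLinearMap.ext fun x => ?_
        have : x ∈ K := hKtop ▸ Submodule.mem_top
        simpa using LinearMap.mem_ker.mp this
      set Q : Polynomial ℂ := ∑ a ∈ Finset.range (dq + 1), Polynomial.C (q.coeff a) * X ^ (dq - a) with hQ
      have hQcoeff0 : Q.coeff 0 = q.coeff dq := by
        rw [hQ, Polynomial.finset_sum_coeff]
        rw [Finset.sum_eq_single dq]
        · simp
        · intro b hb hbne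
          have hble : b ≤ dq := by simpa [Nat.lt_succ_iff] using Finset.mem_range.mp hb
          rw [Polynomial.coeff_C_mul, Polynomial.coeff_X_pow, if_neg (by omega), mul_zero]
        · intro hdq
          exact absurd (Finset.mem_range.mpr (Nat.lt_succ_self dq)) hdq
      have hQne : Q ≠ 0 := by
        intro h
        rw [h, Polynomial.coeff_zero] at hQcoeff0
        exact Polynomial.leadingCoeff_ne_zero.mpr hq hQcoeff0.symm
      have hRne : (X ^ k0 * Q : Polynomial ℂ) ≠ 0 :=
        mul_ne_zero (pow_ne_zero _ Polynomial.X_ne_zero) hQne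
      have haveval : Polynomial.aeval A (X ^ k0 * Q) = B := by
        rw [map_mul, map_pow, Polynomial.aeval_X, hB]
        congr 1
        rw [hQ, map_sum, hSdef]
        refine Finset.sum_congr rfl fun a _ => ?_
        rw [map_mul, Polynomial.aeval_C, map_pow, Polynomial.aeval_X, ← Algebra.smul_def]
      obtain ⟨lam, x, hx0, hAx⟩ :=
        exists_eigen A (X ^ k0 * Q : Polynomial ℂ).natDegree _ le_rfl hRne
          (by rw [haveval, hB0])
      set E : Submodule ℂ ℓ² := LinearMap.ker (A - lam • (1 : ℓ² →L[ℂ] ℓ²)).toLinearMap with hEdef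
      have hmemE : ∀ y : ℓ², y ∈ E ↔ A y = lam • y := by
        intro y
        rw [hEdef, LinearMap.mem_ker, ContinuousLinearMap.coe_coe, ContinuousLinearMap.sub_apply,
          ContinuousLinearMap.smul_apply, ContinuousLinearMap.one_apply, sub_eq_zero]
      have hEclosed : IsClosed (E : Set ℓ²) := ContinuousLinearMap.isClosed_ker _
      have hxE : x ∈ E := (hmemE x).mpr hAx
      have hEinv : ∀ y ∈ E, A y ∈ E := by
        intro y hy
        rw [hmemE] at hy ⊢
        rw [hy, map_smul, hy]
      rcases eq_or_ne E ⊤ with hEtop | hEtop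
      · -- A = lam • 1 : every subspace is invariant
        have hscal : ∀ y : ℓ², A y = lam • y := fun y =>
          (hmemE y).mp (hEtop ▸ Submodule.mem_top)
        refine ⟨Submodule.span ℂ ({e₀} : Set ℓ²), ?_, ?_, ?_, ?_⟩
        · exact Submodule.closed_of_finiteDimensional _
        · rw [Submodule.ne_bot_iff]
          exact ⟨e₀, Submodule.subset_span rfl, e₀_ne_zero⟩
        · intro htop
          exact e₁_not_mem_span (htop ▸ Submodule.mem_top)
        · intro y hy
          rw [hscal y]
          exact Submodule.smul_mem _ _ hy
      · exact ⟨E, hEclosed, Submodule.ne_bot_iff E |>.mpr ⟨x, hxE, hx0⟩, hEtop, hEinv⟩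
    · exact ⟨K, hKclosed, Submodule.ne_bot_iff K |>.mpr ⟨f, hfK, hf0⟩, hKtop, hKinv⟩
  · -- w ≠ 0 : closure of the orbit span of w
    set Msp : Submodule ℂ ℓ² := Submodule.span ℂ (Set.range fun k : ℕ => (A ^ k) w) with hMsp
    set M : Submodule ℂ ℓ² := Msp.topologicalClosure with hM
    have hMclosed : IsClosed (M : Set ℓ²) := Submodule.isClosed_topologicalClosure _
    have hwM : w ∈ M :=
      Msp.le_topologicalClosure (Submodule.subset_span ⟨0, by simp⟩)
    have hspA : ∀ x ∈ Msp, A x ∈ Msp := by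
      intro x hx
      induction hx using Submodule.span_induction with
      | mem y hy =>
        obtain ⟨k, rfl⟩ := hy
        exact Submodule.subset_span
          ⟨k + 1, by show (A ^ (k + 1)) w = A ((A ^ k) w)
                     rw [pow_succ', ContinuousLinearMap.mul_apply]⟩
      | zero => simp
      | add y z _ _ hy hz => rw [map_add]; exact Msp.add_mem hy hz
      | smul a y _ hy => rw [map_smul]; exact Msp.smul_mem a hy
    have hMA : ∀ x ∈ M, A x ∈ M := by
      intro x hx
      have hmt : Set.MapsTo A (Msp : Set ℓ²) (Msp : Set ℓ²) := fun y hy => hspA y hy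
      have h2 := hmt.closure A.continuous
      have hx' : x ∈ closure (Msp : Set ℓ²) := by
        rwa [← Submodule.topologicalClosure_coe]
      have := h2 hx'
      rwa [hM, SetLike.mem_coe.symm, Submodule.topologicalClosure_coe]
    have hgM : ∀ x ∈ M, (inner ℂ g x : ℂ) = 0 := by
      have hker : Msp ≤ LinearMap.ker ((innerSL ℂ g) : ℓ² →ₗ[ℂ] ℂ) := by
        rw [hMsp, Submodule.span_le]
        rintro x ⟨k, rfl⟩
        simpa [LinearMap.mem_ker] using hw k
      have hle : M ≤ LinearMap.ker ((innerSL ℂ g) : ℓ² →ₗ[ℂ] ℂ) :=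
        Msp.topologicalClosure_minimal hker (ContinuousLinearMap.isClosed_ker (innerSL ℂ g))
      intro x hx
      simpa using LinearMap.mem_ker.mp (hle hx)
    have hMtop : M ≠ ⊤ := by
      intro htop
      have : (inner ℂ g g : ℂ) = 0 := hgM g (htop ▸ Submodule.mem_top)
      exact hg0 (inner_self_eq_zero.mp this)
    exact ⟨M, hMclosed, Submodule.ne_bot_iff M |>.mpr ⟨w, hwM, hww⟩, hMtop, hMA⟩



/-- Theorem 4.4 (a variant of Theorem C).  Let `A ∈ B(ℓ²)` with `r(A) < 1`.  Then `A` is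
intransitive iff there are nonzero `f, g ∈ ℓ²` such that
`ν(z) = ∑ ⟨A^n f, g⟩ z^n` is a rational function. -/
theorem stmt17
    (A : ℓ² →L[ℂ] ℓ²) (hr : spectralRadius ℂ A < 1) :
    (∃ M : Submodule ℂ ℓ², IsClosed (M : Set ℓ²) ∧ M ≠ ⊥ ∧ M ≠ ⊤ ∧ ∀ x ∈ M, A x ∈ M) ↔
      (∃ f g : ℓ², f ≠ 0 ∧ g ≠ 0 ∧
        ∃ p q : Polynomial ℂ, q ≠ 0 ∧
          ∀ z : ℂ, ‖z‖ < 1 →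
            q.eval z * ∑' n : ℕ, (inner ℂ g ((A ^ n) f) : ℂ) * z ^ n = p.eval z) := by
  constructor
  · exact forward_dir A
  · rintro ⟨f, g, hf0, hg0, p, q, hq, hz⟩
    exact backward_dir A hr f g hf0 hg0 p q hq hz

end
end

section
/- Let A be a bounded linear operator on ℓ² with spectral radius r(A) < 1. Suppose there exist nonzero vectors f, g ∈ ℓ², a complex number α, and a natural number k such that ⟨A^n f, g⟩ = α·⟨A^{n+1} f, g⟩ for all integers n ≥ k. Then A is intransitive: there is a closed subspace M with M ≠ {0}, M ≠ ℓ², and A M ⊆ M. -/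
local notation "ℓ²" => lp (fun _ : ℕ => ℂ) 2

/-- If some nonzero vector is orthogonal (pairing with `g`) to the whole orbit,
we get an invariant subspace. -/
lemma orth_case (A : ℓ² →L[ℂ] ℓ²) (g : ℓ²) (hg : g ≠ 0) (v : ℓ²) (hv : v ≠ 0)
    (h0 : ∀ n : ℕ, (inner ℂ g ((A ^ n) v) : ℂ) = 0) :
    ∃ M : Submodule ℂ ℓ², IsClosed (M : Set ℓ²) ∧ M ≠ ⊥ ∧ M ≠ ⊤ ∧ ∀ x ∈ M, A x ∈ M := by
  set S : Set ℓ² := Set.range (fun n : ℕ => (A ^ n) v) with hS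
  set M : Submodule ℂ ℓ² := (Submodule.span ℂ S).topologicalClosure with hM
  have hle : M ≤ (innerSL ℂ g).ker := by
    apply Submodule.topologicalClosure_minimal
    · rw [Submodule.span_le]
      rintro x ⟨n, rfl⟩
      simpa using h0 n
    · exact ContinuousLinearMap.isClosed_ker (innerSL ℂ g)
  refine ⟨M, (Submodule.span ℂ S).isClosed_topologicalClosure, ?_, ?_, ?_⟩
  · intro h
    have : v ∈ M := by
      apply Submodule.le_topologicalClosure
      exact Submodule.subset_span ⟨0, by simp⟩
    rw [h, Submodule.mem_bot] at this
    exact hv this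
  · intro h
    have : g ∈ M := h ▸ Submodule.mem_top
    have := hle this
    simp only [LinearMap.mem_ker, innerSL_apply_apply] at this
    exact hg (inner_self_eq_zero.mp this)
  · intro x hx
    have hmap : Set.MapsTo A (Submodule.span ℂ S : Set ℓ²) (Submodule.span ℂ S : Set ℓ²) := by
      intro y hy
      have : Submodule.map (A : ℓ² →ₗ[ℂ] ℓ²) (Submodule.span ℂ S) ≤ Submodule.span ℂ S := by
        rw [Submodule.map_span, Submodule.span_le]
        rintro z ⟨_, ⟨n, rfl⟩, rfl⟩
        apply Submodule.subset_span
        exact ⟨n + 1, by simp [pow_succ']⟩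
      exact this ⟨y, hy, rfl⟩
    exact map_mem_closure A.continuous hx hmap

/-- An eigenvector gives an invariant subspace (using a second nonzero vector `g` to
handle the scalar-operator case). -/
lemma eig_case (A : ℓ² →L[ℂ] ℓ²) (g : ℓ²) (hg : g ≠ 0) (w : ℓ²) (hw : w ≠ 0)
    (c : ℂ) (hww : A w = c • w) :
    ∃ M : Submodule ℂ ℓ², IsClosed (M : Set ℓ²) ∧ M ≠ ⊥ ∧ M ≠ ⊤ ∧ ∀ x ∈ M, A x ∈ M := by
  set K : Submodule ℂ ℓ² := (A - c • (1 : ℓ² →L[ℂ] ℓ²)).ker with hK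
  have hmemK : ∀ x : ℓ², x ∈ K ↔ A x = c • x := by
    intro x
    simp [hK, LinearMap.mem_ker, sub_eq_zero]
  by_cases hKtop : K = ⊤
  · -- A is scalar: every closed subspace is invariant; use the kernel of ⟪g, ·⟫.
    have hsc : ∀ x : ℓ², A x = c • x := fun x => (hmemK x).mp (hKtop ▸ Submodule.mem_top)
    set M : Submodule ℂ ℓ² := (innerSL ℂ g).ker with hM
    have hMclosed : IsClosed (M : Set ℓ²) := ContinuousLinearMap.isClosed_ker (innerSL ℂ g)
    refine ⟨M, hMclosed, ?_, ?_, ?_⟩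
    · -- find a nonzero vector orthogonal to g
      set e0 : ℓ² := lp.single 2 0 (1 : ℂ) with he0
      set e1 : ℓ² := lp.single 2 1 (1 : ℂ) with he1
      have he00 : e0 0 = 1 := lp.single_apply_self 2 0 1
      have he01 : e0 1 = 0 := lp.single_apply_ne 2 0 1 (by decide)
      have he11 : e1 1 = 1 := lp.single_apply_self 2 1 1
      intro hbot
      by_cases h0 : (inner ℂ g e0 : ℂ) = 0
      · have : e0 ∈ M := by simp [hM, LinearMap.mem_ker, h0]
        rw [hbot, Submodule.mem_bot] at this
        have := congrArg (fun x : ℓ² => x 0) this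
        simp [he00] at this
      · set y : ℓ² := (inner ℂ g e0 : ℂ) • e1 - (inner ℂ g e1 : ℂ) • e0 with hy
        have hyM : y ∈ M := by
          simp [hM, LinearMap.mem_ker, hy, inner_sub_right, inner_smul_right]
          ring
        rw [hbot, Submodule.mem_bot] at hyM
        have := congrArg (fun x : ℓ² => x 1) hyM
        simp only [hy, lp.coeFn_sub, lp.coeFn_smul, Pi.sub_apply, Pi.smul_apply] at this
        rw [he11, he01] at this
        simp at this
        exact h0 (by simpa using this)
    · intro htop
      have : g ∈ M := htop ▸ Submodule.mem_top
      simp only [hM, LinearMap.mem_ker, innerSL_apply_apply] at this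
      exact hg (inner_self_eq_zero.mp this)
    · intro x hx
      simp only [hM, LinearMap.mem_ker, innerSL_apply_apply] at hx ⊢
      rw [hsc x, map_smul, hx, smul_zero]
  · refine ⟨K, ?_, ?_, hKtop, ?_⟩
    · exact ContinuousLinearMap.isClosed_ker (A - c • (1 : ℓ² →L[ℂ] ℓ²))
    · intro h
      have : w ∈ K := (hmemK w).mpr hww
      rw [h, Submodule.mem_bot] at this
      exact hw this
    · intro x hx
      rw [hmemK] at hx ⊢
      rw [hx, map_smul, hx]

/-- Corollary 3.6 (1).  Let `A ∈ B(ℓ²)` with `r(A) < 1`.  If there are nonzero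
`f, g ∈ ℓ²`, `α ∈ ℂ` and `k ∈ ℕ` with `⟨A^n f, g⟩ = α ⟨A^{n+1} f, g⟩` for all `n ≥ k`,
then `A` is intransitive. -/
theorem stmt18
    (A : ℓ² →L[ℂ] ℓ²) (hr : spectralRadius ℂ A < 1)
    (f g : ℓ²) (hf : f ≠ 0) (hg : g ≠ 0) (α : ℂ) (k : ℕ)
    (hrec : ∀ n : ℕ, k ≤ n →
      (inner ℂ g ((A ^ n) f) : ℂ) = α * (inner ℂ g ((A ^ (n + 1)) f) : ℂ)) :
    ∃ M : Submodule ℂ ℓ², IsClosed (M : Set ℓ²) ∧ M ≠ ⊥ ∧ M ≠ ⊤ ∧ ∀ x ∈ M, A x ∈ M := by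
  set v : ℓ² := (A ^ k) f - α • (A ^ (k + 1)) f with hv
  by_cases hvz : v = 0
  · by_cases hwz : (A ^ k) f = 0
    · -- find an eigenvector for 0
      have key : ∀ m : ℕ, (A ^ m) f = 0 → ∃ j : ℕ, (A ^ j) f ≠ 0 ∧ A ((A ^ j) f) = 0 := by
        intro m
        induction m with
        | zero => intro h; simp at h; exact absurd h hf
        | succ m ih =>
          intro h
          by_cases hm : (A ^ m) f = 0
          · exact ih hm
          · exact ⟨m, hm, by rwa [pow_succ'] at h⟩
      obtain ⟨j, hj1, hj2⟩ := key k hwz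
      exact eig_case A g hg _ hj1 0 (by rw [hj2, zero_smul])
    · -- A^k f is an eigenvector with eigenvalue α⁻¹
      have heq : (A ^ k) f = α • A ((A ^ k) f) := by
        have := sub_eq_zero.mp hvz
        rwa [pow_succ'] at this
      have hα : α ≠ 0 := by
        intro h; rw [h, zero_smul] at heq; exact hwz heq
      have : A ((A ^ k) f) = α⁻¹ • (A ^ k) f := by
        rw [eq_inv_smul_iff₀ hα]; exact heq.symm
      exact eig_case A g hg _ hwz α⁻¹ this
  · apply orth_case A g hg v hvz
    intro n
    have : (A ^ n) v = (A ^ (n + k)) f - α • (A ^ (n + k + 1)) f := by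
      rw [hv, map_sub, map_smul, ← ContinuousLinearMap.comp_apply, ← ContinuousLinearMap.mul_def,
        ← pow_add, ← ContinuousLinearMap.comp_apply, ← ContinuousLinearMap.mul_def, ← pow_add]
      ring_nf
    rw [this, inner_sub_right, inner_smul_right, hrec (n + k) (by omega), sub_eq_zero]
end

section
/- Let H be a separable infinite-dimensional complex Hilbert space and T a bounded linear operator on H with spectral radius r(T) < 1. Suppose there exist a closed subspace M of H with T² M ⊆ M and M ≠ {0}, M ≠ H, nonzero vectors x ∈ M and y ∈ M^⊥, a positive integer d, and complex numbers λ₁, …, λ_d with |λ_i| > 1 for each i, such that ⟨T^{2k} x, T* y⟩ = ∑_{i=1}^d λ_i^{-k} for every integer k ≥ 0. Then T is intransitive: there is a closed subspace N with N ≠ {0}, N ≠ H, and T N ⊆ N. -/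
open Polynomial


/-- Proposition 4.6.  Let `T ∈ B(H)` with `r(T) < 1`.  Suppose `M` is a nontrivial closed
subspace invariant under `T²`, `0 ≠ x ∈ M`, `0 ≠ y ∈ M^⊥`, and there are `λ₁, …, λ_d`
with `|λ_i| > 1` such that `⟨T^{2k} x, T* y⟩ = ∑_i λ_i^{-k}` for all `k ≥ 0`.  Then `T`
is intransitive.  (The paper's inner product is linear in the first argument, so
`⟨u, v⟩ = ⟪v, u⟫` in Mathlib's convention.) -/
theorem stmt19
    {H : Type*} [NormedAddCommGroup H] [InnerProductSpace ℂ H] [CompleteSpace H]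
    [TopologicalSpace.SeparableSpace H] (hinf : ¬ FiniteDimensional ℂ H)
    (T : H →L[ℂ] H) (hr : spectralRadius ℂ T < 1)
    (M : Submodule ℂ H) (hMclosed : IsClosed (M : Set H))
    (hM2 : ∀ v ∈ M, (T ^ 2) v ∈ M) (hMbot : M ≠ ⊥) (hMtop : M ≠ ⊤)
    (x y : H) (hxM : x ∈ M) (hx : x ≠ 0) (hyM : y ∈ Mᗮ) (hy : y ≠ 0)
    (d : ℕ) (hd : 0 < d) (lam : Fin d → ℂ) (hlam : ∀ i, 1 < ‖lam i‖)
    (hk : ∀ k : ℕ,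
      (inner ℂ ((ContinuousLinearMap.adjoint T) y) ((T ^ (2 * k)) x) : ℂ)
        = ∑ i, (lam i)⁻¹ ^ k) :
    ∃ N : Submodule ℂ H, IsClosed (N : Set H) ∧ N ≠ ⊥ ∧ N ≠ ⊤ ∧ ∀ v ∈ N, T v ∈ N := by
  classical
  set S : H →L[ℂ] H := T ^ 2 with hS
  set μ : Fin d → ℂ := fun i => (lam i)⁻¹ with hμ
  -- powers of S preserve M
  have hSmem : ∀ (n : ℕ) (v : H), v ∈ M → (S ^ n) v ∈ M := by
    intro n
    induction n with
    | zero => intro v hv; simpa using hv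
    | succ n ih =>
      intro v hv
      have h1 : (S ^ (n+1)) v = S ((S ^ n) v) := by
        rw [pow_succ']; rfl
      rw [h1]; exact hM2 _ (ih v hv)
  -- aeval of any polynomial at S preserves M (applied to elements of M)
  have haevalmem : ∀ (q : ℂ[X]) (v : H), v ∈ M → ((aeval S) q) v ∈ M := by
    intro q
    induction q using Polynomial.induction_on' with
    | add p q hp hq =>
      intro v hv
      rw [map_add, ContinuousLinearMap.add_apply]
      exact M.add_mem (hp v hv) (hq v hv)
    | monomial n a =>
      intro v hv
      rw [aeval_monomial]
      have : ((algebraMap ℂ (H →L[ℂ] H)) a * S ^ n) v = a • ((S ^ n) v) := by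
        simp [Algebra.algebraMap_eq_smul_one]
      rw [this]
      exact M.smul_mem _ (hSmem n v hv)
  -- key computation
  have key : ∀ (q : ℂ[X]) (k : ℕ),
      (inner ℂ ((ContinuousLinearMap.adjoint T) y) ((T ^ (2 * k)) (((aeval S) q) x)) : ℂ)
        = ∑ i, μ i ^ k * q.eval (μ i) := by
    intro q
    induction q using Polynomial.induction_on' with
    | add p q hp hq =>
      intro k
      rw [map_add, ContinuousLinearMap.add_apply, map_add, inner_add_right, hp k, hq k,
        ← Finset.sum_add_distrib]
      simp [eval_add, mul_add]
    | monomial n a =>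
      intro k
      have h1 : (T ^ (2*k)) (((aeval S) (monomial n a)) x) = a • ((T ^ (2*(k+n))) x) := by
        rw [aeval_monomial]
        have h2 : ((algebraMap ℂ (H →L[ℂ] H)) a * S ^ n) x = a • ((S ^ n) x) := by
          simp [Algebra.algebraMap_eq_smul_one]
        rw [h2, map_smul]
        congr 1
        have h3 : (S ^ n) = T ^ (2*n) := by rw [hS, ← pow_mul]
        rw [h3, ← ContinuousLinearMap.mul_apply, ← pow_add]
        congr 1
        ring
      rw [h1, inner_smul_right, hk (k+n)]
      rw [Finset.mul_sum]
      apply Finset.sum_congr rfl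
      intro i _
      rw [eval_monomial]
      rw [show ((lam i)⁻¹ : ℂ) = μ i from rfl]
      ring
  -- the polynomial and the vector
  set p : ℂ[X] := ∏ i, (X - C (μ i)) with hp
  set w : H := ((aeval S) p) x with hw
  have hort : ∀ k : ℕ,
      (inner ℂ ((ContinuousLinearMap.adjoint T) y) ((T ^ (2 * k)) w) : ℂ) = 0 := by
    intro k
    rw [hw, key p k]
    apply Finset.sum_eq_zero
    intro i _
    have : p.eval (μ i) = 0 := by
      rw [hp, eval_prod]
      exact Finset.prod_eq_zero (Finset.mem_univ i) (by simp)
    rw [this, mul_zero]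
  by_cases hw0 : w = 0
  · -- Case B: T² has an eigenvector
    have eig : ∀ (l : List ℂ) (v : H), v ≠ 0 →
        ((aeval S) (l.map (fun t => X - C t)).prod) v = 0 →
        ∃ (c : ℂ) (u : H), u ≠ 0 ∧ S u = c • u := by
      intro l
      induction l with
      | nil =>
        intro v hv h0
        simp at h0
        exact absurd h0 hv
      | cons t l ih =>
        intro v hv h0
        by_cases hz : ((aeval S) ((l.map (fun t => X - C t)).prod)) v = 0
        · exact ih v hv hz
        · refine ⟨t, _, hz, ?_⟩
          have h1 : ((aeval S) (X - C t)) (((aeval S) ((l.map (fun t => X - C t)).prod)) v) = 0 := by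
            rw [← ContinuousLinearMap.mul_apply, ← map_mul]
            simpa [List.prod_cons] using h0
          have h2 : ((aeval S) (X - C t)) = S - (algebraMap ℂ (H →L[ℂ] H)) t := by
            simp [map_sub]
          rw [h2] at h1
          have h3 : S (((aeval S) ((l.map (fun t => X - C t)).prod)) v)
              - t • (((aeval S) ((l.map (fun t => X - C t)).prod)) v) = 0 := by
            simpa [Algebra.algebraMap_eq_smul_one] using h1
          have := sub_eq_zero.mp h3
          exact this
    have hlp : ((List.ofFn μ).map (fun t => X - C t)).prod = p := by
      rw [List.map_ofFn, List.prod_ofFn, hp]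
      rfl
    obtain ⟨c, u, hu0, hSu⟩ := eig (List.ofFn μ) x hx (by rw [hlp]; exact hw0)
    refine ⟨Submodule.span ℂ ({u, T u} : Set H), ?_, ?_, ?_, ?_⟩
    · have : FiniteDimensional ℂ (Submodule.span ℂ ({u, T u} : Set H)) :=
        FiniteDimensional.span_of_finite ℂ (Set.toFinite _)
      exact Submodule.closed_of_finiteDimensional _
    · intro hbot
      have : u ∈ (⊥ : Submodule ℂ H) := hbot ▸ Submodule.subset_span (Set.mem_insert _ _)
      exact hu0 (Submodule.mem_bot ℂ |>.mp this)
    · intro htop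
      have h1 : FiniteDimensional ℂ (Submodule.span ℂ ({u, T u} : Set H)) :=
        FiniteDimensional.span_of_finite ℂ (Set.toFinite _)
      rw [htop] at h1
      exact hinf (Submodule.topEquiv.finiteDimensional)
    · intro v hv
      have hle : Submodule.span ℂ ({u, T u} : Set H)
          ≤ (Submodule.span ℂ ({u, T u} : Set H)).comap (T : H →ₗ[ℂ] H) := by
        rw [Submodule.span_le]
        intro z hz
        rw [SetLike.mem_coe, Submodule.mem_comap]
        simp only [Set.mem_insert_iff, Set.mem_singleton_iff] at hz
        rcases hz with rfl | rfl
        · exact Submodule.subset_span (by right; rfl)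
        · have hTT : T (T u) = c • u := by
            have h5 : (T ^ 2) u = c • u := hSu
            rw [pow_two, ContinuousLinearMap.mul_apply] at h5
            exact h5
          rw [ContinuousLinearMap.coe_coe, hTT]
          exact Submodule.smul_mem _ _ (Submodule.subset_span (by left; rfl))
      exact hle hv
  · -- Case A
    have hwM : w ∈ M := haevalmem p x hxM
    set f : ℕ → H := fun n => (T ^ n) w with hf
    set N₀ : Submodule ℂ H := Submodule.span ℂ (Set.range f) with hN₀
    set N : Submodule ℂ H := N₀.topologicalClosure with hN
    have hwN₀ : w ∈ N₀ := by
      apply Submodule.subset_span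
      exact ⟨0, by simp [hf]⟩
    have hfy : ∀ n : ℕ, (inner ℂ (f n) y : ℂ) = 0 := by
      intro n
      rcases Nat.even_or_odd n with ⟨k, hk2⟩ | ⟨k, hk2⟩
      · -- even : f n ∈ M
        have : f n ∈ M := by
          rw [hf]
          have h3 : (T ^ n) = S ^ k := by rw [hS, ← pow_mul, hk2]; ring_nf
          simp only
          rw [h3]
          exact hSmem k w hwM
        exact hyM _ this
      · -- odd
        have h1 : (inner ℂ y (f n) : ℂ) = 0 := by
          have h2 := hort k
          rw [ContinuousLinearMap.adjoint_inner_left] at h2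
          have h3 : T ((T ^ (2*k)) w) = f n := by
            rw [hf]
            simp only
            rw [hk2, ← ContinuousLinearMap.mul_apply, ← pow_succ']
          rw [h3] at h2
          exact h2
        rw [← inner_conj_symm, h1, map_zero]
    refine ⟨N, Submodule.isClosed_topologicalClosure _, ?_, ?_, ?_⟩
    · intro hbot
      have : w ∈ (⊥ : Submodule ℂ H) := hbot ▸ (Submodule.le_topologicalClosure _ hwN₀)
      exact hw0 (Submodule.mem_bot ℂ |>.mp this)
    · intro htop
      have h1 : N₀ ≤ (ℂ ∙ y)ᗮ := by
        rw [Submodule.span_le]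
        rintro _ ⟨n, rfl⟩
        rw [SetLike.mem_coe, Submodule.mem_orthogonal_singleton_iff_inner_left]
        exact hfy n
      have h2 : N ≤ (ℂ ∙ y)ᗮ :=
        Submodule.topologicalClosure_minimal N₀ h1 (Submodule.isClosed_orthogonal _)
      have h3 : y ∈ (ℂ ∙ y)ᗮ := h2 (htop ▸ Submodule.mem_top)
      rw [Submodule.mem_orthogonal_singleton_iff_inner_left] at h3
      exact hy (inner_self_eq_zero.mp h3)
    · intro v hv
      have h1 : N₀ ≤ N.comap (T : H →ₗ[ℂ] H) := by
        rw [Submodule.span_le]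
        rintro _ ⟨n, rfl⟩
        have h2 : T (f n) = f (n+1) := by
          rw [hf]
          simp only
          rw [pow_succ', ContinuousLinearMap.mul_apply]
        show T (f n) ∈ N
        rw [h2]
        exact Submodule.le_topologicalClosure _ (Submodule.subset_span ⟨n+1, rfl⟩)
      have hcomapclosed : IsClosed ((N.comap (T : H →ₗ[ℂ] H) : Submodule ℂ H) : Set H) := by
        have : ((N.comap (T : H →ₗ[ℂ] H) : Submodule ℂ H) : Set H) = T ⁻¹' (N : Set H) := rfl
        rw [this]
        exact (Submodule.isClosed_topologicalClosure _).preimage T.continuous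
      exact Submodule.topologicalClosure_minimal N₀ h1 hcomapclosed hv
end
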